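/- arXiv:2605.14775 — 13 statements merged into one kernel-verified Lean document; each statement's English description precedes it below -/
import Mathlib

section
/- Let Δ be a numerical semigroup and d ≥ 2. If A is a submonoid of (ℕ,+) with A ∩ d(ℕ \ Δ) = ∅, then the sumset A + dΔ is a submonoid of (ℕ,+) satisfying (A + dΔ)/d = Δ. -/
/-- A submonoid of (ℕ,+), as a set. -/
def IsSubmonoidN (M : Set ℕ) : Prop :=
  0 ∈ M ∧ ∀ a b : ℕ, a ∈ M → b ∈ M → a + b ∈ M

/-- A numerical semigroup: a submonoid of ℕ with finite complement. -/
def IsNumericalSemigroup (S : Set ℕ) : Prop :=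
  IsSubmonoidN S ∧ (Sᶜ : Set ℕ).Finite

/-- The quotient A/d = {x : d·x ∈ A}. -/
def quotSet (A : Set ℕ) (d : ℕ) : Set ℕ := {x | d * x ∈ A}

/-- The dilation d·A = {d·s : s ∈ A}. -/
def dilate (d : ℕ) (A : Set ℕ) : Set ℕ := (fun s => d * s) '' A

/-- Sumset A + B. -/
def setAdd (A B : Set ℕ) : Set ℕ := {n | ∃ a ∈ A, ∃ b ∈ B, n = a + b}

/-- Minimal system of generators: nonzero elements not a sum of two nonzero elements. -/
def msg (S : Set ℕ) : Set ℕ :=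
  {x | x ∈ S ∧ x ≠ 0 ∧ ∀ a b : ℕ, a ∈ S → b ∈ S → a ≠ 0 → b ≠ 0 → x ≠ a + b}

/-- Frobenius number: largest element of the complement. -/
noncomputable def frob (S : Set ℕ) : ℕ := sSup (Sᶜ : Set ℕ)

/-- Genus: number of gaps. -/
noncomputable def genus (S : Set ℕ) : ℕ := (Sᶜ : Set ℕ).ncard

/-- Multiplicity: least nonzero element. -/
noncomputable def multy (S : Set ℕ) : ℕ := sInf {x | x ∈ S ∧ x ≠ 0}

/-- n(S) = number of elements of S below the Frobenius number. -/
noncomputable def nnum (S : Set ℕ) : ℕ := {s | s ∈ S ∧ s < frob S}.ncard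

/-- Embedding dimension. -/
noncomputable def edim (S : Set ℕ) : ℕ := (msg S).ncard

/-- The semigroup Δ_d(a) = dΔ ∪ ⋃_{i=1}^{d-1} (da+i+dΔ). -/
def Deltada (d a : ℕ) (Δ : Set ℕ) : Set ℕ :=
  dilate d Δ ∪ ⋃ i ∈ Finset.Ico 1 d, (fun s => d * a + i + d * s) '' Δ

/-- Submonoid of ℕ generated by X, as a set. -/
def genBy (X : Set ℕ) : Set ℕ := (AddSubmonoid.closure X : Set ℕ)

/-- Multiples of x. -/
def natMultiples (x : ℕ) : Set ℕ := {n | ∃ k : ℕ, n = k * x}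

/-- Apéry set of S with respect to m. -/
def apery (S : Set ℕ) (m : ℕ) : Set ℕ := {s | s ∈ S ∧ ∀ t ∈ S, s ≠ t + m}

/-- Pseudo-Frobenius numbers, as integers. -/
def PF (S : Set ℕ) : Set ℤ :=
  {z | (∀ n : ℕ, (n : ℤ) = z → n ∉ S) ∧
    ∀ s : ℕ, s ∈ S → s ≠ 0 → ∃ m : ℕ, m ∈ S ∧ (m : ℤ) = z + s}

theorem stmt2 (Δ : Set ℕ) (hΔ : IsNumericalSemigroup Δ) (d : ℕ) (hd : 2 ≤ d)
    (A : Set ℕ) (hA : IsSubmonoidN A) (hdis : A ∩ dilate d (Δᶜ) = ∅) :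
    IsSubmonoidN (setAdd A (dilate d Δ)) ∧ quotSet (setAdd A (dilate d Δ)) d = Δ := by
  obtain ⟨⟨h0, hadd⟩, hfin⟩ := hΔ
  obtain ⟨hA0, hAadd⟩ := hA
  have hdpos : 0 < d := by omega
  constructor
  · constructor
    · exact ⟨0, hA0, 0, ⟨0, h0, by simp⟩, by simp⟩
    · rintro x y ⟨a, ha, _, ⟨s, hs, rfl⟩, rfl⟩ ⟨b, hb, _, ⟨t, ht, rfl⟩, rfl⟩
      exact ⟨a + b, hAadd a b ha hb, d * (s + t), ⟨s + t, hadd s t hs ht, rfl⟩,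
        by ring⟩
  · ext x
    constructor
    · rintro ⟨a, ha, _, ⟨s, hs, rfl⟩, hx⟩
      have hx' : d * x = a + d * s := hx
      have hsx : s ≤ x := by nlinarith
      have ha' : a = d * (x - s) := by
        have : d * (x - s) = d * x - d * s := by
          rcases Nat.exists_eq_add_of_le hsx with ⟨k, rfl⟩
          simp [Nat.mul_add]
        omega
      have hxs : x - s ∈ Δ := by
        by_contra hc
        have : a ∈ A ∩ dilate d (Δᶜ) := ⟨ha, ⟨x - s, hc, ha'.symm⟩⟩
        rw [hdis] at this; exact this
      have := hadd (x - s) s hxs hs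
      rwa [Nat.sub_add_cancel hsx] at this
    · intro hx
      exact ⟨0, hA0, d * x, ⟨x, hx, rfl⟩, by simp⟩
end

section
/- Let Δ be a numerical semigroup, d ≥ 2, and a ∈ Δ \ {0} with a+1 ∈ Δ. Then the set Δ_d(a) = dΔ ∪ ⋃_{i=1}^{d-1} (da + i + dΔ) is a numerical semigroup satisfying Δ_d(a)/d = Δ. -/
lemma memDeltada {d a : ℕ} {Δ : Set ℕ} {n : ℕ} :
    n ∈ Deltada d a Δ ↔
      (∃ s ∈ Δ, n = d * s) ∨ ∃ i, 1 ≤ i ∧ i < d ∧ ∃ s ∈ Δ, n = d * a + i + d * s := by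
  simp only [Deltada, dilate, Set.mem_union, Set.mem_image, Set.mem_iUnion,
    Finset.mem_Ico, exists_prop]
  constructor
  · rintro (⟨s, hs, rfl⟩ | ⟨i, ⟨hi1, hi2⟩, s, hs, rfl⟩)
    · exact Or.inl ⟨s, hs, rfl⟩
    · exact Or.inr ⟨i, hi1, hi2, s, hs, rfl⟩
  · rintro (⟨s, hs, rfl⟩ | ⟨i, hi1, hi2, s, hs, rfl⟩)
    · exact Or.inl ⟨s, hs, rfl⟩
    · exact Or.inr ⟨i, ⟨hi1, hi2⟩, s, hs, rfl⟩

theorem stmt5 (Δ : Set ℕ) (hΔ : IsNumericalSemigroup Δ) (d : ℕ) (hd : 2 ≤ d)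
    (a : ℕ) (ha : a ∈ Δ) (ha0 : a ≠ 0) (ha1 : a + 1 ∈ Δ) :
    IsNumericalSemigroup (Deltada d a Δ) ∧ quotSet (Deltada d a Δ) d = Δ := by
  obtain ⟨⟨h0, hadd⟩, hfin⟩ := hΔ
  have hdpos : 0 < d := by omega
  refine ⟨⟨⟨?_, ?_⟩, ?_⟩, ?_⟩
  · exact memDeltada.mpr (Or.inl ⟨0, h0, by ring⟩)
  · intro x y hx hy
    rw [memDeltada] at hx hy ⊢
    rcases hx with ⟨s, hs, rfl⟩ | ⟨i, hi1, hi2, s, hs, rfl⟩ <;>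
      rcases hy with ⟨t, ht, rfl⟩ | ⟨j, hj1, hj2, t, ht, rfl⟩
    · exact Or.inl ⟨s + t, hadd s t hs ht, by ring⟩
    · exact Or.inr ⟨j, hj1, hj2, s + t, hadd s t hs ht, by ring⟩
    · exact Or.inr ⟨i, hi1, hi2, s + t, hadd s t hs ht, by ring⟩
    · have hast : a + s + t ∈ Δ := hadd _ _ (hadd _ _ ha hs) ht
      have ha1st : a + 1 + s + t ∈ Δ := hadd _ _ (hadd _ _ ha1 hs) ht
      rcases lt_trichotomy (i + j) d with h | h | h
      · refine Or.inr ⟨i + j, by omega, h, a + s + t, hast, ?_⟩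
        have : d * (a + s + t) = d * a + d * s + d * t := by ring
        linarith
      · refine Or.inl ⟨a + (a + 1 + s + t), hadd _ _ ha ha1st, ?_⟩
        have : d * (a + (a + 1 + s + t)) = d * a + d * a + d + d * s + d * t := by ring
        linarith
      · refine Or.inr ⟨i + j - d, by omega, by omega, a + 1 + s + t, ha1st, ?_⟩
        have hk : i + j = d + (i + j - d) := by omega
        have : d * (a + 1 + s + t) = d * a + d + d * s + d * t := by ring
        linarith
  · -- cofinite
    have hbdd : BddAbove (Δᶜ) := hfin.bddAbove
    set N := sSup (Δᶜ) + 1 with hNdef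
    have hN : ∀ n, N ≤ n → n ∈ Δ := by
      intro n hn
      by_contra h
      have := le_csSup hbdd (Set.mem_compl h)
      omega
    apply Set.Finite.subset (Set.finite_Iio (d * (a + N + 1)))
    intro n hn
    simp only [Set.mem_compl_iff] at hn
    by_contra h
    simp only [Set.mem_Iio, not_lt] at h
    apply hn
    have hmod := Nat.div_add_mod n d
    set q := n / d with hq
    set r := n % d with hr
    have hrd : r < d := Nat.mod_lt _ hdpos
    have hqge : a + N ≤ q := by
      by_contra hc
      push_neg at hc
      have h1 : q + 1 ≤ a + N := by omega
      have h2 : d * (q + 1) ≤ d * (a + N) := Nat.mul_le_mul_left d h1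
      have h3 : d * (a + N + 1) = d * (a + N) + d := by ring
      have h4 : d * (q + 1) = d * q + d := by ring
      omega
    rcases Nat.eq_zero_or_pos r with hr0 | hr0
    · refine memDeltada.mpr (Or.inl ⟨q, hN q (by omega), by omega⟩)
    · refine memDeltada.mpr (Or.inr ⟨r, hr0, hrd, q - a, hN (q - a) (by omega), ?_⟩)
      have hqa : q = a + (q - a) := by omega
      have : d * q = d * a + d * (q - a) := by nth_rewrite 1 [hqa]; ring
      omega
  · -- quotient
    ext x
    simp only [quotSet, Set.mem_setOf_eq]
    constructor
    · intro hx
      rcases memDeltada.mp hx with ⟨s, hs, he⟩ | ⟨i, hi1, hi2, s, hs, he⟩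
      · have : x = s := Nat.eq_of_mul_eq_mul_left hdpos he
        rwa [this]
      · exfalso
        have h1 : d * (a + s) < d * x := by
          have : d * (a + s) = d * a + d * s := by ring
          omega
        have h2 : d * x < d * (a + s + 1) := by
          have : d * (a + s + 1) = d * a + d * s + d := by ring
          omega
        have h3 : a + s < x := Nat.lt_of_mul_lt_mul_left h1
        have h4 : x < a + s + 1 := Nat.lt_of_mul_lt_mul_left h2
        omega
    · intro hx
      exact memDeltada.mpr (Or.inl ⟨x, hx, rfl⟩)
end

section
/- Let Δ be a numerical semigroup, d ≥ 2, and a ∈ Δ \ {0} with a+1 ∈ Δ. If {n_1,…,n_e} is the minimal system of generators of Δ, then {dn_1,…,dn_e, da+1, da+2, …, da+d-1} is the minimal system of generators of Δ_d(a); in particular, e(Δ_d(a)) = e(Δ) + d − 1. -/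
lemma dvd_of_shiftX {d X Y r : ℕ} (h : d * X = d * Y + r) : d ∣ r := by
  have h1 : (d * Y + r) % d = r % d := Nat.mul_add_mod _ _ _
  rw [← h, Nat.mul_mod_right] at h1
  exact Nat.dvd_of_mod_eq_zero h1.symm

theorem stmt6 (Δ : Set ℕ) (hΔ : IsNumericalSemigroup Δ) (d : ℕ) (hd : 2 ≤ d)
    (a : ℕ) (ha : a ∈ Δ) (ha0 : a ≠ 0) (ha1 : a + 1 ∈ Δ) :
    msg (Deltada d a Δ)
      = dilate d (msg Δ) ∪ {y | ∃ i, 1 ≤ i ∧ i ≤ d - 1 ∧ y = d * a + i} ∧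
    edim (Deltada d a Δ) = edim Δ + d - 1 := by
  obtain ⟨⟨hzero, hadd⟩, hfin⟩ := hΔ
  have hd0 : 0 < d := by omega
  have hmem : ∀ x, x ∈ Deltada d a Δ ↔
      (∃ s ∈ Δ, x = d * s) ∨ (∃ i, 1 ≤ i ∧ i < d ∧ ∃ s ∈ Δ, x = d * a + i + d * s) := by
    intro x
    unfold Deltada dilate
    simp only [Set.mem_union, Set.mem_image, Set.mem_iUnion, Finset.mem_Ico]
    constructor
    · rintro (⟨s, hs, rfl⟩ | ⟨i, ⟨hi1, hi2⟩, s, hs, rfl⟩)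
      · exact Or.inl ⟨s, hs, rfl⟩
      · exact Or.inr ⟨i, hi1, hi2, s, hs, rfl⟩
    · rintro (⟨s, hs, rfl⟩ | ⟨i, hi1, hi2, s, hs, rfl⟩)
      · exact Or.inl ⟨s, hs, rfl⟩
      · exact Or.inr ⟨i, ⟨hi1, hi2⟩, s, hs, rfl⟩
  -- the set equality
  have hset : msg (Deltada d a Δ)
      = dilate d (msg Δ) ∪ {y | ∃ i, 1 ≤ i ∧ i ≤ d - 1 ∧ y = d * a + i} := by
    ext x
    constructor
    · rintro ⟨hxS, hx0, hxirr⟩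
      rcases (hmem x).1 hxS with ⟨s, hs, rfl⟩ | ⟨i, hi1, hi2, s, hs, rfl⟩
      · -- x = d * s, show s ∈ msg Δ
        left
        have hs0 : s ≠ 0 := by rintro rfl; simp at hx0
        refine ⟨s, ⟨hs, hs0, ?_⟩, rfl⟩
        intro u v hu hv hu0 hv0 huv
        refine hxirr (d * u) (d * v) ((hmem _).2 (Or.inl ⟨u, hu, rfl⟩))
          ((hmem _).2 (Or.inl ⟨v, hv, rfl⟩)) (by positivity) (by positivity) ?_
        rw [huv]; ring
      · rcases Nat.eq_zero_or_pos s with rfl | hs0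
        · right; exact ⟨i, hi1, by omega, by ring⟩
        · exfalso
          refine hxirr (d * a + i) (d * s)
            ((hmem _).2 (Or.inr ⟨i, hi1, hi2, 0, hzero, by ring⟩))
            ((hmem _).2 (Or.inl ⟨s, hs, rfl⟩)) (by omega) (by positivity) rfl
    · rintro (⟨n, ⟨hnΔ, hn0, hnirr⟩, rfl⟩ | ⟨i, hi1, hi2, rfl⟩)
      · -- d * n with n ∈ msg Δ
        refine ⟨(hmem _).2 (Or.inl ⟨n, hnΔ, rfl⟩), by positivity, ?_⟩
        intro u v hu hv hu0 hv0 heq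
        beta_reduce at heq
        rcases (hmem u).1 hu with ⟨s, hs, rfl⟩ | ⟨i, hi1, hi2, s, hs, rfl⟩ <;>
          rcases (hmem v).1 hv with ⟨t, ht, rfl⟩ | ⟨j, hj1, hj2, t, ht, rfl⟩
        · have hst : d * n = d * (s + t) := by rw [heq]; ring
          have : n = s + t := Nat.eq_of_mul_eq_mul_left hd0 hst
          exact hnirr s t hs ht (fun h => hu0 (by simp [h])) (fun h => hv0 (by simp [h])) this
        · have h2 : d * n = d * (s + a + t) + j := by rw [heq]; ring
          have := Nat.eq_zero_of_dvd_of_lt (dvd_of_shiftX h2) hj2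
          omega
        · have h2 : d * n = d * (t + a + s) + i := by rw [heq]; ring
          have := Nat.eq_zero_of_dvd_of_lt (dvd_of_shiftX h2) hi2
          omega
        · have h2 : d * n = d * (2 * a + s + t) + (i + j) := by rw [heq]; ring
          have hdvd : d ∣ (i + j) := dvd_of_shiftX h2
          have hij : i + j = d := by
            have hle : d ≤ i + j := Nat.le_of_dvd (by omega) hdvd
            by_contra hne
            have h3 : d ∣ (i + j - d) := Nat.dvd_sub hdvd dvd_rfl
            have := Nat.le_of_dvd (by omega) h3
            omega
          have h4 : d * n = d * (2 * a + s + t + 1) := by rw [h2, hij]; ring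
          have h5 : n = 2 * a + s + t + 1 := Nat.eq_of_mul_eq_mul_left hd0 h4
          have h6 : a + 1 + s + t ∈ Δ := hadd _ _ (hadd _ _ ha1 hs) ht
          exact hnirr a (a + 1 + s + t) ha h6 ha0 (by omega) (by omega)
      · -- d * a + i
        have hi2' : i < d := by omega
        refine ⟨(hmem _).2 (Or.inr ⟨i, hi1, hi2', 0, hzero, by ring⟩), by omega, ?_⟩
        intro u v hu hv hu0 hv0 heq
        have hda : d ≤ d * a := Nat.le_mul_of_pos_right d (by omega)
        rcases (hmem u).1 hu with ⟨s, hs, rfl⟩ | ⟨j, hj1, hj2, s, hs, rfl⟩ <;>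
          rcases (hmem v).1 hv with ⟨t, ht, rfl⟩ | ⟨k, hk1, hk2, t, ht, rfl⟩
        · have h2 : d * (s + t) = d * a + i := by rw [heq]; ring
          have := Nat.eq_zero_of_dvd_of_lt (dvd_of_shiftX h2) hi2'
          omega
        · -- d*a+i = d*s + (d*a+k+d*t)
          have h1 : i = d * s + d * t + k := by linarith
          rcases Nat.eq_zero_or_pos s with rfl | hs'
          · exact hu0 (by simp)
          · have h2 : d ≤ d * s := Nat.le_mul_of_pos_right d hs'
            have h3 : (0:ℕ) ≤ d * t := Nat.zero_le _
            linarith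
        · have h1 : i = d * s + d * t + j := by linarith
          rcases Nat.eq_zero_or_pos t with rfl | ht'
          · exact hv0 (by simp)
          · have h2 : d ≤ d * t := Nat.le_mul_of_pos_right d ht'
            have h3 : (0:ℕ) ≤ d * s := Nat.zero_le _
            linarith
        · have h1 : i = d * a + j + k + d * s + d * t := by linarith
          have h3 : (0:ℕ) ≤ d * s := Nat.zero_le _
          have h4 : (0:ℕ) ≤ d * t := Nat.zero_le _
          linarith
  refine ⟨hset, ?_⟩
  -- cardinality
  have hbig : ∀ n, sSup (Δᶜ) < n → n ∈ Δ := by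
    intro n hn
    by_contra hnn
    exact absurd (le_csSup hfin.bddAbove hnn) (not_le.2 hn)
  have hMfin : (msg Δ).Finite := by
    apply Set.Finite.subset (Set.finite_Iio (sSup (Δᶜ) + a + 1))
    rintro x ⟨hx1, hx2, hx3⟩
    by_contra hxx
    simp only [Set.mem_Iio, not_lt] at hxx
    have hxa : x - a ∈ Δ := hbig _ (by omega)
    exact hx3 a (x - a) ha hxa ha0 (by omega) (by omega)
  have hinj : Function.Injective (fun s : ℕ => d * s) :=
    fun x y h => Nat.eq_of_mul_eq_mul_left hd0 h
  have hBdef : {y | ∃ i, 1 ≤ i ∧ i ≤ d - 1 ∧ y = d * a + i}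
      = (fun i => d * a + i) '' Set.Icc 1 (d - 1) := by
    ext y
    simp only [Set.mem_setOf_eq, Set.mem_image, Set.mem_Icc]
    constructor
    · rintro ⟨i, h1, h2, rfl⟩; exact ⟨i, ⟨h1, h2⟩, rfl⟩
    · rintro ⟨i, ⟨h1, h2⟩, rfl⟩; exact ⟨i, h1, h2, rfl⟩
  have hBfin : {y | ∃ i, 1 ≤ i ∧ i ≤ d - 1 ∧ y = d * a + i}.Finite := by
    rw [hBdef]; exact (Set.finite_Icc _ _).image _
  have hAfin : (dilate d (msg Δ)).Finite := hMfin.image _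
  have hdisj : Disjoint (dilate d (msg Δ)) {y | ∃ i, 1 ≤ i ∧ i ≤ d - 1 ∧ y = d * a + i} := by
    rw [Set.disjoint_left]
    rintro x ⟨m, hm, rfl⟩ ⟨i, hi1, hi2, hxi⟩
    have h2 : d * m = d * a + i := hxi
    have := Nat.eq_zero_of_dvd_of_lt (dvd_of_shiftX h2) (by omega)
    omega
  have hBcard : {y | ∃ i, 1 ≤ i ∧ i ≤ d - 1 ∧ y = d * a + i}.ncard = d - 1 := by
    rw [hBdef, Set.ncard_image_of_injective _ (fun x y h => by simpa using h : Function.Injective (fun i : ℕ => d * a + i))]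
    rw [← Finset.coe_Icc, Set.ncard_coe_finset, Nat.card_Icc]
    omega
  unfold edim
  rw [hset, Set.ncard_union_eq hdisj hAfin hBfin, hBcard]
  unfold dilate
  rw [Set.ncard_image_of_injective _ hinj]
  omega
end

section
/- Let Δ be a numerical semigroup with Δ ≠ ℕ, d ≥ 2, and a ∈ Δ \ {0} with a+1 ∈ Δ. Then the genus of Δ_d(a) equals d·g(Δ) + (d−1)·a, where g(S) = |ℕ \ S|. -/
/-!
Sort the naturals by their residue modulo `d`. For `n = d * q + i` with `i < d`, the definition of
`Δ_d(a)` gives `n ∈ Δ_d(a) ↔ q ∈ Δ` when `i = 0`, and `n ∈ Δ_d(a) ↔ q ∈ a + Δ` otherwise. So the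
gaps of `Δ_d(a)` in the class of `0` correspond to the `g(Δ)` gaps of `Δ`, and in each of the
other `d - 1` classes to the gaps of `a + Δ`: the `a` numbers below `a` and the `g(Δ)` translates
`a + (gaps of Δ)`. Hence `g(Δ_d(a)) = g(Δ) + (d - 1)(a + g(Δ))`.
-/

def residueFiber (d i : ℕ) (S : Set ℕ) : Set ℕ := (fun q => d * q + i) ⁻¹' S

theorem residueFiber_compl (d i : ℕ) (S : Set ℕ) :
    residueFiber d i Sᶜ = (residueFiber d i S)ᶜ := rfl

theorem mul_add_eq_mul_add_iff {d q q' i i' : ℕ} (hi : i < d) (hi' : i' < d) :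
    d * q + i = d * q' + i' ↔ q = q' ∧ i = i' := by
  refine ⟨fun h => ?_, fun ⟨hq, hi⟩ => hq ▸ hi ▸ rfl⟩
  have hd : 0 < d := by omega
  obtain ⟨hq, hi⟩ := (Nat.div_mod_unique (a := d * q' + i') (d := q) hd).2 ⟨by omega, hi⟩
  obtain ⟨hq', hi'⟩ := (Nat.div_mod_unique hd).2 ⟨add_comm i' (d * q'), hi'⟩
  exact ⟨hq.symm.trans hq', hi.symm.trans hi'⟩

theorem ncard_eq_sum_ncard_residueFiber {d : ℕ} (hd : 0 < d) {S : Set ℕ}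
    (hS : ∀ i : Fin d, (residueFiber d i S).Finite) :
    S.ncard = ∑ i : Fin d, (residueFiber d i S).ncard := by
  have hcover : S = ⋃ i : Fin d, (fun q => d * q + i) '' residueFiber d i S := by
    ext n
    simp only [residueFiber, Set.mem_iUnion, Set.mem_image, Set.mem_preimage]
    refine ⟨fun hn => ⟨⟨n % d, Nat.mod_lt n hd⟩, n / d, ?_, Nat.div_add_mod n d⟩, ?_⟩
    · simpa only [Nat.div_add_mod] using hn
    · rintro ⟨i, q, hq, rfl⟩
      exact hq
  have hdisj : Pairwise (Function.onFun Disjoint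
      fun i : Fin d => (fun q => d * q + i) '' residueFiber d i S) := by
    intro i j hij
    refine Set.disjoint_left.2 ?_
    rintro _ ⟨q, -, rfl⟩ ⟨q', -, h⟩
    exact hij (Fin.ext ((mul_add_eq_mul_add_iff j.2 i.2).1 h).2.symm)
  have hinj (i : ℕ) : Function.Injective (fun q => d * q + i) := fun q q' h =>
    Nat.eq_of_mul_eq_mul_left hd (Nat.add_right_cancel h)
  conv_lhs => rw [hcover]
  rw [Set.ncard_iUnion_of_finite (fun i => (hS i).image _) hdisj, finsum_eq_sum_of_fintype]
  simp only [Set.ncard_image_of_injective _ (hinj _)]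

theorem residueFiber_Deltada {d i : ℕ} (a : ℕ) (Δ : Set ℕ) (hid : i < d) :
    residueFiber d i (Deltada d a Δ) = if i = 0 then Δ else (a + ·) '' Δ := by
  ext q
  have hdilate (s : ℕ) : d * s = d * q + i ↔ s = q ∧ 0 = i := by
    simpa using mul_add_eq_mul_add_iff (q := s) (i := 0) (by omega) hid
  have hshift (j s : ℕ) (hj : j < d) : d * a + j + d * s = d * q + i ↔ a + s = q ∧ j = i := by
    rw [show d * a + j + d * s = d * (a + s) + j by ring]
    exact mul_add_eq_mul_add_iff hj hid
  have hmem : q ∈ residueFiber d i (Deltada d a Δ) ↔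
      (i = 0 ∧ q ∈ Δ) ∨ (i ≠ 0 ∧ q ∈ (a + ·) '' Δ) := by
    simp only [residueFiber, Deltada, dilate, Set.mem_preimage, Set.mem_union, Set.mem_image,
      Set.mem_iUnion, Finset.mem_Ico, exists_prop]
    constructor
    · rintro (⟨s, hs, h⟩ | ⟨j, ⟨hj, hjd⟩, s, hs, h⟩)
      · obtain ⟨rfl, rfl⟩ := (hdilate s).1 h
        exact Or.inl ⟨rfl, hs⟩
      · obtain ⟨rfl, rfl⟩ := (hshift j s hjd).1 h
        exact Or.inr ⟨by omega, s, hs, rfl⟩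
    · rintro (⟨rfl, hq⟩ | ⟨hi, s, hs, rfl⟩)
      · exact Or.inl ⟨q, hq, rfl⟩
      · exact Or.inr ⟨i, ⟨by omega, hid⟩, s, hs, (hshift i s hid).2 ⟨rfl, rfl⟩⟩
  rw [hmem]
  split_ifs with hi <;> simp [hi]

theorem compl_image_add_left (a : ℕ) (S : Set ℕ) :
    ((a + ·) '' S)ᶜ = Set.Iio a ∪ (a + ·) '' Sᶜ := by
  ext n
  simp only [Set.mem_compl_iff, Set.mem_image, Set.mem_union, Set.mem_Iio, not_exists, not_and]
  constructor
  · intro h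
    by_cases hn : n < a
    · exact Or.inl hn
    · exact Or.inr ⟨n - a, fun hs => h _ hs (by omega), by omega⟩
  · rintro (hn | ⟨s, hs, rfl⟩) t ht heq
    · omega
    · exact hs (Nat.add_left_cancel heq ▸ ht)

theorem ncard_compl_image_add_left (a : ℕ) {S : Set ℕ} (hS : Sᶜ.Finite) :
    ((a + ·) '' S)ᶜ.ncard = a + Sᶜ.ncard := by
  have hdisj : Disjoint (Set.Iio a) ((a + ·) '' Sᶜ) :=
    Set.disjoint_left.2 fun n hn ⟨s, _, hs⟩ => by simp only [Set.mem_Iio, ← hs] at hn; omega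
  rw [compl_image_add_left, Set.ncard_union_eq hdisj (Set.finite_Iio a) (hS.image _),
    Set.ncard_image_of_injective _ (add_right_injective a)]
  simp

theorem stmt8_general (Δ : Set ℕ) (hΔ : IsNumericalSemigroup Δ)
    (d : ℕ) (hd : 2 ≤ d)
    (a : ℕ) :
    genus (Deltada d a Δ) = d * genus Δ + (d - 1) * a := by
  obtain ⟨e, rfl⟩ : ∃ e, d = e + 1 := ⟨d - 1, by omega⟩
  have hfiber (i : Fin (e + 1)) : residueFiber (e + 1) i (Deltada (e + 1) a Δ)ᶜ =
      if (i : ℕ) = 0 then Δᶜ else ((a + ·) '' Δ)ᶜ := by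
    rw [residueFiber_compl, residueFiber_Deltada a Δ i.2]
    split_ifs <;> rfl
  have hfin (i : Fin (e + 1)) : (residueFiber (e + 1) i (Deltada (e + 1) a Δ)ᶜ).Finite := by
    rw [hfiber, compl_image_add_left]
    split_ifs
    exacts [hΔ.2, (Set.finite_Iio a).union (hΔ.2.image _)]
  rw [genus, ncard_eq_sum_ncard_residueFiber (by omega) hfin, Fin.sum_univ_succ]
  simp only [hfiber]
  simp only [Fin.val_zero, ↓reduceIte, Fin.val_succ, Nat.add_one_ne_zero,
    ncard_compl_image_add_left a hΔ.2, Finset.sum_const, Finset.card_univ, Fintype.card_fin,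
    smul_eq_mul, genus, Nat.add_sub_cancel]
  ring

theorem stmt8 (Δ : Set ℕ) (hΔ : IsNumericalSemigroup Δ) (hne : Δ ≠ Set.univ)
    (d : ℕ) (hd : 2 ≤ d)
    (a : ℕ) (ha : a ∈ Δ) (ha0 : a ≠ 0) (ha1 : a + 1 ∈ Δ) :
    genus (Deltada d a Δ) = d * genus Δ + (d - 1) * a :=
  stmt8_general Δ hΔ d hd a
end

section
/- Let Δ be a numerical semigroup with Δ ≠ ℕ, d ≥ 2, and a ∈ Δ \ {0} with a+1 ∈ Δ. If Δ satisfies Wilf's inequality e(Δ)·n(Δ) ≥ F(Δ)+1, then Δ_d(a) also satisfies Wilf's inequality e(Δ_d(a))·n(Δ_d(a)) ≥ F(Δ_d(a))+1. -/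
namespace Stmt9Aux

lemma gt_frob_mem {S : Set ℕ} (hfin : (Sᶜ : Set ℕ).Finite) {x : ℕ} (hx : frob S < x) : x ∈ S := by
  by_contra h
  exact absurd (le_csSup hfin.bddAbove h) (not_le.mpr hx)

lemma frob_notMem {S : Set ℕ} (hfin : (Sᶜ : Set ℕ).Finite) (hne : S ≠ Set.univ) : frob S ∉ S := by
  have hne' : (Sᶜ : Set ℕ).Nonempty := by rw [Set.nonempty_compl]; exact hne
  exact hne'.csSup_mem hfin

lemma dvd_of_eq_add {d x y i : ℕ} (h : d * x = d * y + i) : d ∣ i := by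
  have h2 := Nat.dvd_sub (dvd_mul_right d x) (dvd_mul_right d y)
  rwa [h, Nat.add_sub_cancel_left] at h2

lemma mem_D {d a : ℕ} {Δ : Set ℕ} {x : ℕ} :
    x ∈ Deltada d a Δ ↔ (∃ s ∈ Δ, x = d * s) ∨
      (∃ i, 1 ≤ i ∧ i < d ∧ ∃ s ∈ Δ, x = d * a + i + d * s) := by
  simp only [Deltada, dilate, Set.mem_union, Set.mem_image, Set.mem_iUnion, Finset.mem_Ico]
  constructor
  · rintro (⟨s, hs, rfl⟩ | ⟨i, ⟨⟨h1, h2⟩, s, hs, rfl⟩⟩)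
    · exact Or.inl ⟨s, hs, rfl⟩
    · exact Or.inr ⟨i, h1, h2, s, hs, rfl⟩
  · rintro (⟨s, hs, rfl⟩ | ⟨i, h1, h2, s, hs, rfl⟩)
    · exact Or.inl ⟨s, hs, rfl⟩
    · exact Or.inr ⟨i, ⟨⟨h1, h2⟩, s, hs, rfl⟩⟩

section Main
set_option linter.unusedSectionVars false

variable {Δ : Set ℕ} {d a : ℕ}
variable (hΔ : IsNumericalSemigroup Δ) (hne : Δ ≠ Set.univ) (hd : 2 ≤ d)
  (ha : a ∈ Δ) (ha0 : a ≠ 0) (ha1 : a + 1 ∈ Δ)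

include hΔ hne in
lemma frob_pos : 1 ≤ frob Δ := by
  have h := frob_notMem hΔ.2 hne
  rcases Nat.eq_zero_or_pos (frob Δ) with h0 | h1
  · exact absurd (h0 ▸ hΔ.1.1) h
  · exact h1

include hΔ hd ha in
lemma big_mem_D {x : ℕ} (hx : d * (a + frob Δ + 1) ≤ x) : x ∈ Deltada d a Δ := by
  have hd0 : 0 < d := by omega
  rw [mem_D]
  set q := x / d with hq
  set r := x % d with hr
  have hx1 : d * q + r = x := Nat.div_add_mod x d
  have hrd : r < d := Nat.mod_lt _ hd0
  rcases Nat.eq_zero_or_pos r with hr0 | hr0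
  · left
    refine ⟨q, ?_, by omega⟩
    apply gt_frob_mem hΔ.2
    have hle : d * (a + frob Δ + 1) ≤ d * q := by omega
    have := Nat.le_of_mul_le_mul_left hle hd0
    omega
  · right
    have hlink : d * (q + 1) = d * q + d := by ring
    have hqge : a + frob Δ + 1 ≤ q := by
      by_contra hcon
      push_neg at hcon
      have h2 : d * (q + 1) ≤ d * (a + frob Δ + 1) := Nat.mul_le_mul_left d (by omega)
      omega
    have hsplit : d * a + d * (q - a) = d * q := by
      rw [← Nat.mul_add]; congr 1; omega
    refine ⟨r, hr0, hrd, q - a, ?_, by omega⟩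
    apply gt_frob_mem hΔ.2
    omega

include hΔ hd ha in
lemma compl_D_finite : ((Deltada d a Δ)ᶜ : Set ℕ).Finite := by
  apply Set.Finite.subset (Set.finite_Iio (d * (a + frob Δ + 1)))
  intro x hx
  rw [Set.mem_compl_iff] at hx
  rw [Set.mem_Iio]
  by_contra hcon
  exact hx (big_mem_D hΔ hd ha (by omega))

include hΔ hne hd ha in
lemma C_notMem : d * (a + frob Δ) + (d - 1) ∉ Deltada d a Δ := by
  have hF : frob Δ ∉ Δ := frob_notMem hΔ.2 hne
  rw [mem_D]
  rintro (⟨s, hs, heq⟩ | ⟨i, hi1, hi2, s, hs, heq⟩)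
  · -- d*s = d*(a+F) + (d-1), so d ∣ d-1, impossible
    have hdvd : d ∣ d - 1 := dvd_of_eq_add (d := d) (x := s) (y := a + frob Δ) heq.symm
    have := Nat.le_of_dvd (by omega) hdvd
    omega
  · -- d*a + i + d*s = d*(a+F)+(d-1)
    have hsplit : d * a + d * s = d * (a + s) := by ring
    rcases Nat.lt_or_ge i (d - 1) with hlt | hge
    · have heq2 : d * (a + s) = d * (a + frob Δ) + (d - 1 - i) := by omega
      have hdvd : d ∣ d - 1 - i := dvd_of_eq_add heq2
      have := Nat.le_of_dvd (by omega) hdvd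
      omega
    · have hieq : i = d - 1 := by omega
      have heq2 : d * (a + s) = d * (a + frob Δ) := by omega
      have : a + s = a + frob Δ := Nat.eq_of_mul_eq_mul_left (by omega) heq2
      have : s = frob Δ := by omega
      exact hF (this ▸ hs)

include hΔ hne hd ha in
lemma frob_D : frob (Deltada d a Δ) = d * (a + frob Δ) + (d - 1) := by
  apply le_antisymm
  · apply csSup_le'
    intro x hx
    rw [Set.mem_compl_iff] at hx
    by_contra hcon
    have hlink : d * (a + frob Δ + 1) = d * (a + frob Δ) + d := by ring
    exact hx (big_mem_D hΔ hd ha (by omega))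
  · exact le_csSup (compl_D_finite hΔ hd ha).bddAbove (C_notMem hΔ hne hd ha)

lemma unique_rep {d p1 p2 q1 q2 : ℕ} (hp : p1 < d) (hq : q1 < d)
    (h : d * p2 + p1 = d * q2 + q1) : p2 = q2 ∧ p1 = q1 := by
  have hd0 : 0 < d := by omega
  have h1 : (d * p2 + p1) / d = p2 := by
    rw [Nat.mul_add_div hd0, Nat.div_eq_of_lt hp, Nat.add_zero]
  have h2 : (d * q2 + q1) / d = q2 := by
    rw [Nat.mul_add_div hd0, Nat.div_eq_of_lt hq, Nat.add_zero]
  have hpq : p2 = q2 := by rw [← h1, ← h2, h]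
  subst hpq
  exact ⟨rfl, by omega⟩

include hΔ hne hd ha in
lemma nnum_D_ge : a + d * nnum Δ ≤ nnum (Deltada d a Δ) := by
  classical
  have hd0 : 0 < d := by omega
  have hd0' : d ≠ 0 := by omega
  set F := frob Δ with hF
  have hF1 : 1 ≤ F := frob_pos hΔ hne
  set N : Set ℕ := {s | s ∈ Δ ∧ s < F} with hN
  have hNfin : N.Finite := (Set.finite_Iio F).subset (fun x hx => hx.2)
  have hNcard : N.ncard = nnum Δ := rfl
  set Nf : Finset ℕ := hNfin.toFinset with hNf
  have hNfcard : Nf.card = nnum Δ := by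
    rw [← hNcard, Set.ncard_eq_toFinset_card _ hNfin]
  have hNfmem : ∀ s : ℕ, s ∈ Nf ↔ s ∈ Δ ∧ s < F := fun s => by
    rw [hNf, Set.Finite.mem_toFinset]; exact Iff.rfl
  set X1 : Finset ℕ := Nf.image (fun s => d * s) with hX1
  set X2 : Finset ℕ := (Finset.Ico 1 (a+1)).image (fun j => d * (F + j)) with hX2
  set X3 : Finset ℕ := ((Finset.Ico 1 d) ×ˢ Nf).image (fun p => d * a + p.1 + d * p.2) with hX3
  have hinj : Function.Injective (fun s => d * s) := fun x y h => by
    exact Nat.eq_of_mul_eq_mul_left hd0 h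
  have hc1 : X1.card = nnum Δ := by
    rw [hX1, Finset.card_image_of_injective _ hinj, hNfcard]
  have hc2 : X2.card = a := by
    rw [hX2, Finset.card_image_of_injective, Nat.card_Ico]
    · omega
    · intro x y h
      have := Nat.eq_of_mul_eq_mul_left hd0 h
      omega
  have hc3 : X3.card = (d - 1) * nnum Δ := by
    rw [hX3, Finset.card_image_of_injOn, Finset.card_product, Nat.card_Ico, hNfcard]
    rintro ⟨p1, p2⟩ hp ⟨q1, q2⟩ hq h
    simp only [Finset.mem_coe, Finset.mem_product, Finset.mem_Ico] at hp hq
    have h0 : d * a + p1 + d * p2 = d * a + q1 + d * q2 := h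
    have h' : d * (a + p2) + p1 = d * (a + q2) + q1 := by
      have e1 : d * (a + p2) = d * a + d * p2 := by ring
      have e2 : d * (a + q2) = d * a + d * q2 := by ring
      omega
    obtain ⟨h1, h2⟩ := unique_rep hp.1.2 hq.1.2 h'
    have : p2 = q2 := by
      have := Nat.eq_of_mul_eq_mul_left hd0 (show d * (a+p2) = d * (a+q2) from by rw [h1])
      omega
    simp [this, h2]
  -- disjointness
  have hd12 : Disjoint X1 X2 := by
    rw [Finset.disjoint_left]
    rintro x hx1 hx2
    simp only [hX1, hX2, Finset.mem_image, Finset.mem_Ico, hNfmem] at hx1 hx2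
    obtain ⟨s, hs, rfl⟩ := hx1
    obtain ⟨j, hj, heq⟩ := hx2
    have := Nat.eq_of_mul_eq_mul_left hd0 heq.symm
    have hsF : s < F := hs.2
    omega
  have hd123 : Disjoint (X1 ∪ X2) X3 := by
    rw [Finset.disjoint_left]
    rintro x hx12 hx3
    simp only [hX1, hX2, hX3, Finset.mem_union, Finset.mem_image, Finset.mem_Ico,
      Finset.mem_product] at hx12 hx3
    obtain ⟨⟨i, t⟩, ⟨⟨hi1, hi2⟩, ht⟩, heq⟩ := hx3
    have heq' : d * a + i + d * t = x := heq
    have hform : ∃ s0, x = d * s0 := by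
      rcases hx12 with ⟨s, _, rfl⟩ | ⟨j, _, heq2⟩
      · exact ⟨s, rfl⟩
      · exact ⟨F + j, heq2.symm⟩
    obtain ⟨s0, rfl⟩ := hform
    have h' : d * s0 + 0 = d * (a + t) + i := by
      have e2 : d * (a + t) = d * a + d * t := by ring
      omega
    obtain ⟨_, h2⟩ := unique_rep (show (0:ℕ) < d from hd0) hi2 h'
    omega
  set X : Finset ℕ := (X1 ∪ X2) ∪ X3 with hX
  have hXcard : X.card = a + d * nnum Δ := by
    rw [hX, Finset.card_union_of_disjoint hd123, Finset.card_union_of_disjoint hd12,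
      hc1, hc2, hc3]
    have e1 : (d - 1) * nnum Δ = d * nnum Δ - nnum Δ := Nat.sub_one_mul d (nnum Δ)
    have e2 : nnum Δ ≤ d * nnum Δ := Nat.le_mul_of_pos_left _ hd0
    omega
  -- subset
  have hfrobD : frob (Deltada d a Δ) = d * (a + F) + (d - 1) := frob_D hΔ hne hd ha
  have hsub : (X : Set ℕ) ⊆ {s | s ∈ Deltada d a Δ ∧ s < frob (Deltada d a Δ)} := by
    intro x hx
    simp only [hX, Finset.coe_union, Set.mem_union, hX1, hX2, hX3, Finset.coe_image,
      Set.mem_image, Finset.mem_coe, Finset.mem_product, hNfmem] at hx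
    rw [Set.mem_setOf_eq, hfrobD, mem_D]
    rcases hx with (⟨s, hs, rfl⟩ | ⟨j, hj, rfl⟩) | ⟨⟨i, t⟩, ⟨hi, ht⟩, heq⟩
    · refine ⟨Or.inl ⟨s, hs.1, rfl⟩, ?_⟩
      have : d * s ≤ d * (a + F) := Nat.mul_le_mul_left d (by have := hs.2; omega)
      omega
    · rw [Finset.mem_Ico] at hj
      refine ⟨Or.inl ⟨F + j, gt_frob_mem hΔ.2 (by omega), rfl⟩, ?_⟩
      have : d * (F + j) ≤ d * (a + F) := Nat.mul_le_mul_left d (by omega)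
      omega
    · have heq' : d * a + i + d * t = x := heq
      subst heq'
      rw [Finset.mem_Ico] at hi
      refine ⟨Or.inr ⟨i, hi.1, hi.2, t, ht.1, rfl⟩, ?_⟩
      have h1 : d * (t + 1) ≤ d * F := Nat.mul_le_mul_left d (by have := ht.2; omega)
      have h2 : d * (t + 1) = d * t + d := by ring
      have h3 : d * (a + F) = d * a + d * F := by ring
      omega
  have hfin2 : {s | s ∈ Deltada d a Δ ∧ s < frob (Deltada d a Δ)}.Finite :=
    (Set.finite_Iio _).subset (fun x hx => hx.2)
  calc a + d * nnum Δ = X.card := hXcard.symm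
    _ = (X : Set ℕ).ncard := (Set.ncard_coe_finset X).symm
    _ ≤ _ := Set.ncard_le_ncard hsub hfin2

include hΔ hd ha ha0 ha1 in
lemma U1_sub : (fun m => d * m) '' msg Δ ⊆ msg (Deltada d a Δ) := by
  have hd0 : 0 < d := by omega
  rintro x ⟨m, hm, rfl⟩
  obtain ⟨hm1, hm2, hm3⟩ := hm
  refine ⟨mem_D.mpr (Or.inl ⟨m, hm1, rfl⟩), Nat.mul_ne_zero (by omega) hm2, ?_⟩
  intro u v hu hv hu0 hv0 heq0
  have heq : d * m = u + v := heq0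
  clear heq0
  rcases mem_D.mp hu with ⟨s1, hs1, rfl⟩ | ⟨i, hi1, hi2, s1, hs1, rfl⟩ <;>
    rcases mem_D.mp hv with ⟨s2, hs2, rfl⟩ | ⟨j, hj1, hj2, s2, hs2, rfl⟩
  · -- 00
    have e1 : d * (s1 + s2) = d * s1 + d * s2 := by ring
    have hms : m = s1 + s2 := Nat.eq_of_mul_eq_mul_left hd0 (by omega)
    have hs1' : s1 ≠ 0 := fun h => hu0 (by simp [h])
    have hs2' : s2 ≠ 0 := fun h => hv0 (by simp [h])
    exact hm3 s1 s2 hs1 hs2 hs1' hs2' hms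
  · -- 0i
    have e1 : d * (s1 + a + s2) = d * s1 + d * a + d * s2 := by ring
    have hdvd : d ∣ j := dvd_of_eq_add (x := m) (y := s1 + a + s2) (by omega)
    have := Nat.le_of_dvd (by omega) hdvd
    omega
  · -- i0
    have e1 : d * (a + s1 + s2) = d * a + d * s1 + d * s2 := by ring
    have hdvd : d ∣ i := dvd_of_eq_add (x := m) (y := a + s1 + s2) (by omega)
    have := Nat.le_of_dvd (by omega) hdvd
    omega
  · -- ii
    have e1 : d * (a + a + s1 + s2) = d * a + d * a + d * s1 + d * s2 := by ring
    have hdvd : d ∣ i + j := dvd_of_eq_add (x := m) (y := a + a + s1 + s2) (by omega)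
    obtain ⟨k, hk⟩ := hdvd
    have hk1 : k = 1 := by
      rcases Nat.lt_or_ge k 2 with h2 | h2
      · interval_cases k
        · omega
        · rfl
      · exfalso
        have h3 : d * 2 ≤ d * k := Nat.mul_le_mul_left d h2
        have h4 : d * 2 = d + d := by ring
        omega
    subst hk1
    have e2 : d * (a + a + s1 + s2 + 1) = d * a + d * a + d * s1 + d * s2 + d * 1 := by ring
    have hms : m = a + a + s1 + s2 + 1 := Nat.eq_of_mul_eq_mul_left hd0 (by omega)
    have hsum : a + 1 + s1 + s2 ∈ Δ := hΔ.1.2 _ _ (hΔ.1.2 _ _ ha1 hs1) hs2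
    exact hm3 a (a + 1 + s1 + s2) ha hsum ha0 (by omega) (by omega)

include hΔ hd ha ha0 in
lemma U2_sub : (fun i => d * a + i) '' Set.Ico 1 d ⊆ msg (Deltada d a Δ) := by
  have hd0 : 0 < d := by omega
  rintro x ⟨i, hi, rfl⟩
  obtain ⟨hi1, hi2⟩ := hi
  refine ⟨mem_D.mpr (Or.inr ⟨i, hi1, hi2, 0, hΔ.1.1, by ring⟩), by positivity, ?_⟩
  intro u v hu hv hu0 hv0 heq0
  have heq : d * a + i = u + v := heq0
  clear heq0
  rcases mem_D.mp hu with ⟨s1, hs1, rfl⟩ | ⟨i1, hi11, hi12, s1, hs1, rfl⟩ <;>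
    rcases mem_D.mp hv with ⟨s2, hs2, rfl⟩ | ⟨i2, hi21, hi22, s2, hs2, rfl⟩
  · -- 00
    have e1 : d * (s1 + s2) = d * s1 + d * s2 := by ring
    have hdvd : d ∣ i := dvd_of_eq_add (x := s1 + s2) (y := a) (by omega)
    have := Nat.le_of_dvd (by omega) hdvd
    omega
  · -- 0i
    have e1 : d * (a + s1 + s2) = d * a + d * s1 + d * s2 := by ring
    have h' : d * a + i = d * (a + s1 + s2) + i2 := by omega
    obtain ⟨h1, h2⟩ := unique_rep hi2 hi22 h'
    have : s1 = 0 := by omega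
    exact hu0 (by simp [this])
  · -- i0
    have e1 : d * (a + s1 + s2) = d * a + d * s1 + d * s2 := by ring
    have h' : d * a + i = d * (a + s1 + s2) + i1 := by omega
    obtain ⟨h1, h2⟩ := unique_rep hi2 hi12 h'
    have : s2 = 0 := by omega
    exact hv0 (by simp [this])
  · -- ii
    have e1 : d * (a + a + s1 + s2) = d * a + d * a + d * s1 + d * s2 := by ring
    rcases Nat.lt_or_ge (i1 + i2) d with hlt | hge
    · have h' : d * a + i = d * (a + a + s1 + s2) + (i1 + i2) := by omega
      obtain ⟨h1, h2⟩ := unique_rep hi2 hlt h'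
      omega
    · have e2 : d * (a + a + s1 + s2 + 1) = d * a + d * a + d * s1 + d * s2 + d * 1 := by ring
      have h' : d * a + i = d * (a + a + s1 + s2 + 1) + (i1 + i2 - d) := by omega
      obtain ⟨h1, h2⟩ := unique_rep hi2 (by omega) h'
      omega

include hΔ hd ha ha0 in
lemma msg_D_finite : (msg (Deltada d a Δ)).Finite := by
  apply Set.Finite.subset (Set.finite_Iic (frob (Deltada d a Δ) + d * a))
  intro x hx
  rw [Set.mem_Iic]
  by_contra hcon
  push_neg at hcon
  obtain ⟨hx1, hx2, hx3⟩ := hx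
  have hu : d * a ∈ Deltada d a Δ := mem_D.mpr (Or.inl ⟨a, ha, rfl⟩)
  have hv : x - d * a ∈ Deltada d a Δ := gt_frob_mem (compl_D_finite hΔ hd ha) (by omega)
  exact hx3 (d * a) (x - d * a) hu hv (Nat.mul_ne_zero (by omega) ha0) (by omega) (by omega)

include hΔ hne hd ha ha0 ha1 in
lemma edim_D_ge (hfm : (msg Δ).Finite) :
    edim Δ + (d - 1) ≤ edim (Deltada d a Δ) := by
  have hd0 : 0 < d := by omega
  set U1 : Set ℕ := (fun m => d * m) '' msg Δ with hU1
  set U2 : Set ℕ := (fun i => d * a + i) '' Set.Ico 1 d with hU2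
  have hU1fin : U1.Finite := hfm.image _
  have hU2fin : U2.Finite := (Set.finite_Ico 1 d).image _
  have hU1card : U1.ncard = edim Δ :=
    Set.ncard_image_of_injective _ (fun x y h => Nat.eq_of_mul_eq_mul_left hd0 h)
  have hU2card : U2.ncard = d - 1 := by
    rw [hU2, Set.ncard_image_of_injective _ (fun x y h => by
      have h' : d * a + x = d * a + y := h
      omega : Function.Injective (fun i => d * a + i))]
    rw [← Finset.coe_Ico, Set.ncard_coe_finset, Nat.card_Ico]
  have hdisj : Disjoint U1 U2 := by
    rw [Set.disjoint_left]
    rintro x ⟨m, _, rfl⟩ ⟨i, hi, heq⟩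
    rw [Set.mem_Ico] at hi
    have hdvd : d ∣ i := dvd_of_eq_add (x := m) (y := a) heq.symm
    have := Nat.le_of_dvd (by omega) hdvd
    omega
  have hsub : U1 ∪ U2 ⊆ msg (Deltada d a Δ) :=
    Set.union_subset (U1_sub hΔ hd ha ha0 ha1) (U2_sub hΔ hd ha ha0)
  calc edim Δ + (d - 1) = (U1 ∪ U2).ncard := by
        rw [Set.ncard_union_eq hdisj hU1fin hU2fin, hU1card, hU2card]
    _ ≤ (msg (Deltada d a Δ)).ncard := Set.ncard_le_ncard hsub (msg_D_finite hΔ hd ha ha0)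

end Main
end Stmt9Aux

theorem stmt9 (Δ : Set ℕ) (hΔ : IsNumericalSemigroup Δ) (hne : Δ ≠ Set.univ)
    (d : ℕ) (hd : 2 ≤ d)
    (a : ℕ) (ha : a ∈ Δ) (ha0 : a ≠ 0) (ha1 : a + 1 ∈ Δ)
    (hwilf : edim Δ * nnum Δ ≥ frob Δ + 1) :
    edim (Deltada d a Δ) * nnum (Deltada d a Δ) ≥ frob (Deltada d a Δ) + 1 := by
  have hF1 : 1 ≤ frob Δ := Stmt9Aux.frob_pos hΔ hne
  set e := edim Δ with he
  set n := nnum Δ with hn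
  set F := frob Δ with hF
  have he1 : 1 ≤ e := by
    by_contra h
    push_neg at h
    have h0 : e = 0 := by omega
    rw [h0, Nat.zero_mul] at hwilf
    omega
  have hfm : (msg Δ).Finite := by
    by_contra h
    have : (msg Δ).ncard = 0 := Set.Infinite.ncard h
    rw [he] at he1
    rw [edim] at he1
    omega
  have hed : e + (d - 1) ≤ edim (Deltada d a Δ) :=
    Stmt9Aux.edim_D_ge hΔ hne hd ha ha0 ha1 hfm
  have hnn : a + d * n ≤ nnum (Deltada d a Δ) :=
    Stmt9Aux.nnum_D_ge hΔ hne hd ha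
  have hfr : frob (Deltada d a Δ) = d * (a + F) + (d - 1) :=
    Stmt9Aux.frob_D hΔ hne hd ha
  rw [ge_iff_le, hfr]
  have hmono : (e + (d - 1)) * (a + d * n) ≤ edim (Deltada d a Δ) * nnum (Deltada d a Δ) :=
    Nat.mul_le_mul hed hnn
  have hexp : (e + (d - 1)) * (a + d * n)
      = e * a + e * (d * n) + (d - 1) * a + (d - 1) * (d * n) := by ring
  have hwilf' : d * (F + 1) ≤ d * (e * n) := Nat.mul_le_mul_left d hwilf
  have l1 : e * (d * n) = d * (e * n) := by ring
  have h2 : d * a ≤ (d - 1 + e) * a := Nat.mul_le_mul_right a (by omega)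
  have l2 : (d - 1 + e) * a = (d - 1) * a + e * a := by ring
  have l3 : d * (a + F) = d * a + d * F := by ring
  have l4 : d * (F + 1) = d * F + d * 1 := by ring
  have l5 : (0:ℕ) ≤ (d - 1) * (d * n) := Nat.zero_le _
  omega
end

section
/- Let Δ be a numerical semigroup, d ≥ 2, and let M be a submonoid of (ℕ,+) with M/d = Δ. Then M can be written as a nonempty intersection of numerical semigroups S each satisfying S/d = Δ. Conversely, any nonempty intersection of numerical semigroups S with S/d = Δ is a submonoid M with M/d = Δ. -/
theorem stmt11 (Δ : Set ℕ) (hΔ : IsNumericalSemigroup Δ) (hne : Δ ≠ Set.univ)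
    (d : ℕ) (hd : 2 ≤ d) :
    (∀ M : Set ℕ, IsSubmonoidN M → quotSet M d = Δ →
      ∃ I : Set (Set ℕ), I.Nonempty ∧
        (∀ S ∈ I, IsNumericalSemigroup S ∧ quotSet S d = Δ) ∧ M = ⋂₀ I) ∧
    (∀ I : Set (Set ℕ), I.Nonempty →
      (∀ S ∈ I, IsNumericalSemigroup S ∧ quotSet S d = Δ) →
      IsSubmonoidN (⋂₀ I) ∧ quotSet (⋂₀ I) d = Δ) := by
  obtain ⟨⟨hΔ0, hΔadd⟩, hΔfin⟩ := hΔ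
  constructor
  · intro M hM hq
    obtain ⟨hM0, hMadd⟩ := hM
    set F := sSup (Δᶜ : Set ℕ) with hF
    have hgap : ∀ x, F < x → x ∈ Δ := by
      intro x hx
      by_contra h
      exact absurd (le_csSup hΔfin.bddAbove h) (not_le.mpr hx)
    have hdpos : 0 < d := by omega
    have hbig : ∀ m, d ∣ m → d * (F + 1) ≤ m → m ∈ M := by
      rintro m ⟨y, rfl⟩ hm
      have h1 : F + 1 ≤ y := le_of_mul_le_mul_left hm hdpos
      have h2 : y ∈ Δ := hgap y (by omega)
      rw [← hq] at h2; exact h2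
    refine ⟨Set.range (fun k => M ∪ {m | d * (F + 1) + k ≤ m ∧ ¬ d ∣ m}),
      ⟨_, ⟨0, rfl⟩⟩, ?_, ?_⟩
    · rintro S ⟨k, rfl⟩
      refine ⟨⟨⟨Or.inl hM0, ?_⟩, ?_⟩, ?_⟩
      · rintro a b (ha | ⟨ha1, ha2⟩) (hb | ⟨hb1, hb2⟩)
        · exact Or.inl (hMadd a b ha hb)
        · by_cases hdvd : d ∣ a + b
          · exact Or.inl (hbig _ hdvd (by omega))
          · exact Or.inr ⟨by omega, hdvd⟩
        · by_cases hdvd : d ∣ a + b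
          · exact Or.inl (hbig _ hdvd (by omega))
          · exact Or.inr ⟨by omega, hdvd⟩
        · by_cases hdvd : d ∣ a + b
          · exact Or.inl (hbig _ hdvd (by omega))
          · exact Or.inr ⟨by omega, hdvd⟩
      · apply Set.Finite.subset (Set.finite_Iio (d * (F + 1) + k))
        intro m hm
        simp only [Set.mem_compl_iff, Set.mem_union, not_or, Set.mem_setOf_eq,
          not_and, not_not] at hm
        obtain ⟨hm1, hm2⟩ := hm
        by_contra h
        have hle : d * (F + 1) + k ≤ m := by
          simpa [Set.mem_Iio, not_lt] using h
        exact hm1 (hbig m (hm2 hle) (by omega))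
      · ext x
        simp only [quotSet, Set.mem_setOf_eq, Set.mem_union]
        constructor
        · rintro (h | ⟨_, h2⟩)
          · rw [← hq]; exact h
          · exact absurd ⟨x, rfl⟩ h2
        · intro h; left; rw [← hq] at h; exact h
    · ext m
      simp only [Set.mem_sInter, Set.mem_range]
      constructor
      · rintro hm S ⟨k, rfl⟩; exact Or.inl hm
      · intro h
        rcases h _ ⟨m + 1, rfl⟩ with h | ⟨h1, _⟩
        · exact h
        · omega
  · rintro I ⟨S₀, hS₀⟩ hI
    refine ⟨⟨?_, ?_⟩, ?_⟩
    · intro S hS; exact (hI S hS).1.1.1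
    · intro a b ha hb S hS
      exact (hI S hS).1.1.2 a b (ha S hS) (hb S hS)
    · ext x
      simp only [quotSet, Set.mem_setOf_eq, Set.mem_sInter]
      constructor
      · intro h
        have := h S₀ hS₀
        rw [← (hI S₀ hS₀).2]; exact this
      · intro hx S hS
        have := (hI S hS).2
        rw [← this] at hx; exact hx
end

section
/- Let Δ be a numerical semigroup, d ≥ 2, and let M be a submonoid of (ℕ,+) with M/d = Δ. Set A = msg(M) \ dΔ, the minimal generators of M not lying in dΔ. Then M = ⟨A⟩ + dΔ, and for every subset B ⊆ M with M = ⟨B⟩ + dΔ one has A ⊆ B; i.e., A is the unique minimal M_d(Δ)-system of generators of M. -/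
/-!
Every element of `M` is a sum of minimal generators, by strong induction; the minimal generators
lying in `dΔ` are absorbed by `dΔ`, a submonoid contained in `M` because `Δ = M/d`. Conversely, if
`x ∈ A` is written as `g + w` with `g ∈ ⟨B⟩` and `w ∈ dΔ`, then `w = 0` since `x` is not a sum of two
nonzero elements of `M` and `x ∉ dΔ`; and a minimal generator lying in `⟨B⟩ ⊆ M` must be an
element of `B`, for the same reason.
-/

namespace IsSubmonoidN

variable {M : Set ℕ}

def toAddSubmonoid (hM : IsSubmonoidN M) : AddSubmonoid ℕ where
  carrier := M
  zero_mem' := hM.1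
  add_mem' := fun {a b} ha hb => hM.2 a b ha hb

theorem genBy_subset (hM : IsSubmonoidN M) {X : Set ℕ} (hX : X ⊆ M) : genBy X ⊆ M :=
  AddSubmonoid.closure_le.mpr (show X ⊆ hM.toAddSubmonoid from hX)

theorem quotSet (hM : IsSubmonoidN M) (d : ℕ) : IsSubmonoidN (quotSet M d) :=
  ⟨by simpa [_root_.quotSet] using hM.1,
    fun a b ha hb => by simpa [_root_.quotSet, mul_add] using hM.2 _ _ ha hb⟩

theorem dilate (hM : IsSubmonoidN M) (d : ℕ) : IsSubmonoidN (dilate d M) := by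
  refine ⟨⟨0, hM.1, mul_zero d⟩, ?_⟩
  rintro _ _ ⟨s, hs, rfl⟩ ⟨t, ht, rfl⟩
  exact ⟨s + t, hM.2 s t hs ht, mul_add d s t⟩

theorem setAdd {A B : Set ℕ} (hA : IsSubmonoidN A) (hB : IsSubmonoidN B) :
    IsSubmonoidN (setAdd A B) := by
  refine ⟨⟨0, hA.1, 0, hB.1, rfl⟩, ?_⟩
  rintro _ _ ⟨a, ha, b, hb, rfl⟩ ⟨a', ha', b', hb', rfl⟩
  exact ⟨a + a', hA.2 _ _ ha ha', b + b', hB.2 _ _ hb hb', by ring⟩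

theorem setAdd_subset (hM : IsSubmonoidN M) {A B : Set ℕ} (hA : A ⊆ M) (hB : B ⊆ M) :
    _root_.setAdd A B ⊆ M := by
  rintro _ ⟨a, ha, b, hb, rfl⟩
  exact hM.2 a b (hA ha) (hB hb)

end IsSubmonoidN

theorem isSubmonoidN_genBy (X : Set ℕ) : IsSubmonoidN (genBy X) :=
  ⟨(AddSubmonoid.closure X).zero_mem, fun _ _ => (AddSubmonoid.closure X).add_mem⟩

theorem dilate_quotSet_subset (M : Set ℕ) (d : ℕ) : dilate d (quotSet M d) ⊆ M := by
  rintro _ ⟨x, hx, rfl⟩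
  exact hx

theorem msg_subset (M : Set ℕ) : msg M ⊆ M := fun _ hx => hx.1

theorem exists_add_of_notMem_msg {M : Set ℕ} {m : ℕ} (hm : m ∈ M) (hm0 : m ≠ 0)
    (hmsg : m ∉ msg M) : ∃ a ∈ M, ∃ b ∈ M, a ≠ 0 ∧ b ≠ 0 ∧ m = a + b := by
  by_contra! h
  exact hmsg ⟨hm, hm0, fun a b ha hb ha0 hb0 => h a ha b hb ha0 hb0⟩

theorem subset_genBy_msg (M : Set ℕ) : M ⊆ genBy (msg M) := by
  intro m hm
  induction m using Nat.strong_induction_on with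
  | _ m ih =>
    by_cases hm0 : m = 0
    · exact hm0 ▸ (AddSubmonoid.closure (msg M)).zero_mem
    by_cases hmsg : m ∈ msg M
    · exact AddSubmonoid.subset_closure hmsg
    obtain ⟨a, ha, b, hb, ha0, hb0, rfl⟩ := exists_add_of_notMem_msg hm hm0 hmsg
    exact (AddSubmonoid.closure (msg M)).add_mem (ih a (by omega) ha) (ih b (by omega) hb)

theorem genBy_subset_setAdd_genBy_diff {X D : Set ℕ} (hD : IsSubmonoidN D) :
    genBy X ⊆ setAdd (genBy (X \ D)) D := by
  refine ((isSubmonoidN_genBy _).setAdd hD).genBy_subset fun x hx => ?_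
  by_cases hxD : x ∈ D
  · exact ⟨0, (AddSubmonoid.closure _).zero_mem, x, hxD, (zero_add x).symm⟩
  · exact ⟨x, AddSubmonoid.subset_closure ⟨hx, hxD⟩, 0, hD.1, (add_zero x).symm⟩

theorem mem_of_mem_msg_of_mem_genBy {M B : Set ℕ} (hM : IsSubmonoidN M) (hB : B ⊆ M) {x : ℕ}
    (hx : x ∈ msg M) (hxB : x ∈ genBy B) : x ∈ B := by
  suffices h : ∀ y ∈ AddSubmonoid.closure B, y ∈ msg M → y ∈ B from h x hxB hx
  intro y hy
  induction hy using AddSubmonoid.closure_induction with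
  | mem z hz => exact fun _ => hz
  | zero => exact fun h0 => absurd rfl h0.2.1
  | add a b ha hb iha ihb =>
    intro hab
    by_cases ha0 : a = 0
    · simpa [ha0] using ihb (by simpa [ha0] using hab)
    by_cases hb0 : b = 0
    · simpa [hb0] using iha (by simpa [hb0] using hab)
    exact absurd rfl (hab.2.2 a b (hM.genBy_subset hB ha) (hM.genBy_subset hB hb) ha0 hb0)

theorem mem_left_of_mem_msg_of_mem_setAdd {M Y D : Set ℕ} (hY : Y ⊆ M) (hD : D ⊆ M) {x : ℕ}
    (hx : x ∈ msg M) (hxD : x ∉ D) (hxYD : x ∈ setAdd Y D) : x ∈ Y := by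
  obtain ⟨y, hy, w, hw, rfl⟩ := hxYD
  by_cases hw0 : w = 0
  · simpa [hw0] using hy
  by_cases hy0 : y = 0
  · exact absurd (by simpa [hy0] using hw) hxD
  exact absurd rfl (hx.2.2 y w (hY hy) (hD hw) hy0 hw0)

theorem stmt12_general (Δ : Set ℕ) (d : ℕ)
    (M : Set ℕ) (hM : IsSubmonoidN M) (hq : quotSet M d = Δ)
    (A : Set ℕ) (hA : A = msg M \ dilate d Δ) :
    M = setAdd (genBy A) (dilate d Δ) ∧
    ∀ B : Set ℕ, B ⊆ M → M = setAdd (genBy B) (dilate d Δ) → A ⊆ B := by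
  subst hq hA
  have hD : IsSubmonoidN (dilate d (quotSet M d)) := (hM.quotSet d).dilate d
  have hDM : dilate d (quotSet M d) ⊆ M := dilate_quotSet_subset M d
  refine ⟨subset_antisymm ?_ ?_, fun B hBM hB x hx => ?_⟩
  · exact (subset_genBy_msg M).trans (genBy_subset_setAdd_genBy_diff hD)
  · exact hM.setAdd_subset (hM.genBy_subset (Set.sdiff_subset.trans (msg_subset M))) hDM
  · have hxB : x ∈ genBy B := mem_left_of_mem_msg_of_mem_setAdd (hM.genBy_subset hBM) hDM
      hx.1 hx.2 (hB ▸ hx.1.1)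
    exact mem_of_mem_msg_of_mem_genBy hM hBM hx.1 hxB

theorem stmt12 (Δ : Set ℕ) (hΔ : IsNumericalSemigroup Δ) (d : ℕ) (hd : 2 ≤ d)
    (M : Set ℕ) (hM : IsSubmonoidN M) (hq : quotSet M d = Δ)
    (A : Set ℕ) (hA : A = msg M \ dilate d Δ) :
    M = setAdd (genBy A) (dilate d Δ) ∧
    ∀ B : Set ℕ, B ⊆ M → M = setAdd (genBy B) (dilate d Δ) → A ⊆ B :=
  stmt12_general Δ d M hM hq A hA
end

section
/- Let Δ ≠ ℕ be a numerical semigroup with multiplicity m, and let d ≥ 2. The maximal value of rank_{M_d(Δ)}(S) = |msg(S) \ dΔ| over all numerical semigroups S with S/d = Δ equals (d−1)·m. -/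
lemma aux_nsmul_mem {S : Set ℕ} (hS : IsSubmonoidN S) {x : ℕ} (hx : x ∈ S) :
    ∀ j : ℕ, j * x ∈ S := by
  intro j
  induction j with
  | zero => simpa using hS.1
  | succ n ih =>
    have := hS.2 _ _ ih hx
    simpa [Nat.succ_mul] using this

lemma aux_filter_dvd_range (d m : ℕ) (hd : 0 < d) :
    (Finset.range (d*m)).filter (fun r => d ∣ r) = (Finset.range m).image (fun i => d * i) := by
  ext r
  simp only [Finset.mem_filter, Finset.mem_range, Finset.mem_image]
  constructor
  · rintro ⟨h1, k, rfl⟩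
    refine ⟨k, ?_, rfl⟩
    exact Nat.lt_of_mul_lt_mul_left h1
  · rintro ⟨i, hi, rfl⟩
    exact ⟨(Nat.mul_lt_mul_left hd).mpr hi, ⟨i, rfl⟩⟩

lemma aux_card_not_dvd_generic (s : Finset ℕ) (d : ℕ)
    (h1 : (s.filter (fun r => d ∣ r)).card = (s.filter (fun r => d ∣ r)).card) :
    (s.filter (fun r => ¬ d ∣ r)).card = s.card - (s.filter (fun r => d ∣ r)).card := by
  rw [Finset.filter_not, Finset.card_sdiff_of_subset (Finset.filter_subset _ _)]

lemma aux_card_range_not_dvd (d m : ℕ) (hd : 0 < d) :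
    ((Finset.range (d*m)).filter (fun r => ¬ d ∣ r)).card = d*m - m := by
  have h1 : ((Finset.range (d*m)).filter (fun r => d ∣ r)).card = m := by
    rw [aux_filter_dvd_range d m hd,
      Finset.card_image_of_injective _ (fun a b h => Nat.eq_of_mul_eq_mul_left hd h),
      Finset.card_range]
  rw [Finset.filter_not, Finset.card_sdiff_of_subset (Finset.filter_subset _ _), h1, Finset.card_range]

lemma aux_filter_dvd_Ioc (d C m : ℕ) (hd : 0 < d) :
    (Finset.Ioc (d*C) (d*C + d*m)).filter (fun r => d ∣ r)
      = (Finset.Ioc C (C+m)).image (fun i => d * i) := by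
  have hma : d*(C+m) = d*C + d*m := Nat.mul_add d C m
  ext r
  simp only [Finset.mem_filter, Finset.mem_Ioc, Finset.mem_image]
  constructor
  · rintro ⟨⟨h1, h2⟩, k, rfl⟩
    refine ⟨k, ⟨Nat.lt_of_mul_lt_mul_left h1, ?_⟩, rfl⟩
    have : d * k ≤ d * (C + m) := by omega
    exact Nat.le_of_mul_le_mul_left this hd
  · rintro ⟨i, ⟨h1, h2⟩, rfl⟩
    refine ⟨⟨(Nat.mul_lt_mul_left hd).mpr h1, ?_⟩, ⟨i, rfl⟩⟩
    have : d * i ≤ d * (C + m) := Nat.mul_le_mul_left d h2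
    omega

lemma aux_card_Ioc_not_dvd (d C m : ℕ) (hd : 0 < d) :
    ((Finset.Ioc (d*C) (d*C + d*m)).filter (fun r => ¬ d ∣ r)).card = d*m - m := by
  have h1 : ((Finset.Ioc (d*C) (d*C + d*m)).filter (fun r => d ∣ r)).card = m := by
    rw [aux_filter_dvd_Ioc d C m hd,
      Finset.card_image_of_injective _ (fun a b h => Nat.eq_of_mul_eq_mul_left hd h),
      Nat.card_Ioc]
    omega
  rw [Finset.filter_not, Finset.card_sdiff_of_subset (Finset.filter_subset _ _), h1, Nat.card_Ioc]
  omega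

lemma aux_upper (Δ : Set ℕ) (d m : ℕ) (hd : 2 ≤ d) (hmΔ : m ∈ Δ) (hm0 : m ≠ 0)
    (S : Set ℕ) (hS : IsNumericalSemigroup S) (hq : quotSet S d = Δ) :
    (msg S \ dilate d Δ).ncard ≤ ((Finset.range (d*m)).filter (fun r => ¬ d ∣ r)).card := by
  have hd0 : 0 < d := by omega
  have hdm0 : 0 < d * m := Nat.mul_pos hd0 (Nat.pos_of_ne_zero hm0)
  have hdmS : d * m ∈ S := by
    have : m ∈ quotSet S d := hq ▸ hmΔ
    exact this
  -- key: no element of msg S \ dilate d Δ is divisible by d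
  have hnd : ∀ x ∈ msg S \ dilate d Δ, ¬ d ∣ x := by
    rintro x ⟨hx, hxd⟩ ⟨t, rfl⟩
    refine hxd ⟨t, ?_, rfl⟩
    have : t ∈ quotSet S d := hx.1
    exact hq ▸ this
  rw [← Set.ncard_coe_finset]
  apply Set.ncard_le_ncard_of_injOn (fun x => x % (d*m))
  · rintro x ⟨hx, hxd⟩
    simp only [Finset.coe_filter, Finset.mem_range, Set.mem_setOf_eq, Finset.mem_coe,
      Finset.mem_filter]
    constructor
    · exact Nat.mod_lt _ hdm0
    · intro hdvd
      exact hnd x ⟨hx, hxd⟩ ((Nat.dvd_mod_iff ⟨m, rfl⟩).mp hdvd)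
  · intro x hx y hy hxy
    by_contra hne
    -- wlog x < y
    rcases Nat.lt_or_ge x y with h | h
    · -- y = x + k, d*m ∣ k
      have hk : d * m ∣ y - x := (Nat.modEq_iff_dvd' (Nat.le_of_lt h)).mp hxy
      obtain ⟨j, hj⟩ := hk
      have hj0 : j ≠ 0 := by rintro rfl; omega
      have hkS : d * m * j ∈ S := by
        have := aux_nsmul_mem hS.1 hdmS j
        simpa [Nat.mul_comm] using this
      have := hy.1.2.2 x (d*m*j) hx.1.1 hkS hx.1.2.1
        (by positivity)
      apply this
      omega
    · have hlt : y < x := by omega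
      have hk : d * m ∣ x - y := (Nat.modEq_iff_dvd' (Nat.le_of_lt hlt)).mp hxy.symm
      obtain ⟨j, hj⟩ := hk
      have hj0 : j ≠ 0 := by rintro rfl; omega
      have hkS : d * m * j ∈ S := by
        have := aux_nsmul_mem hS.1 hdmS j
        simpa [Nat.mul_comm] using this
      have := hx.1.2.2 y (d*m*j) hy.1.1 hkS hy.1.2.1 (by positivity)
      apply this
      omega

lemma aux_exists (Δ : Set ℕ) (hΔ : IsNumericalSemigroup Δ) (hne : Δ ≠ Set.univ)
    (d : ℕ) (hd : 2 ≤ d) (m : ℕ) (hm : m = multy Δ) :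
    ∃ S : Set ℕ, IsNumericalSemigroup S ∧ quotSet S d = Δ ∧
      msg S \ dilate d Δ =
        ↑((Finset.Ioc (d*(frob Δ + 1)) (d*(frob Δ + 1) + d*m)).filter (fun r => ¬ d ∣ r)) := by
  obtain ⟨⟨h0Δ, haddΔ⟩, hfinΔ⟩ := hΔ
  have hd0 : 0 < d := by omega
  set F := frob Δ with hF
  -- everything above F is in Δ
  have hbig : ∀ n, F < n → n ∈ Δ := by
    intro n hn
    by_contra hnot
    have : n ≤ F := le_csSup (hfinΔ.bddAbove) hnot
    omega
  set C := F + 1 with hC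
  have hCΔ : C ∈ Δ := hbig _ (by omega)
  -- multiplicity facts
  have hMne : {x | x ∈ Δ ∧ x ≠ 0}.Nonempty := ⟨C, hCΔ, by omega⟩
  have hmΔ : m ∈ Δ ∧ m ≠ 0 := hm ▸ Nat.sInf_mem hMne
  have hmle : ∀ x, x ∈ Δ → x ≠ 0 → m ≤ x := by
    intro x hx hx0
    rw [hm]
    exact Nat.sInf_le ⟨hx, hx0⟩
  have hmC : m ≤ C := hmle C hCΔ (by omega)
  have hm0 : 0 < m := Nat.pos_of_ne_zero hmΔ.2
  -- the semigroup
  set S : Set ℕ := dilate d Δ ∪ {x | d*C < x ∧ ¬ d ∣ x} with hSdef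
  have hdil : ∀ x, x ∈ dilate d Δ ↔ ∃ s ∈ Δ, d * s = x := by
    intro x; exact Set.mem_image _ _ _
  have hdildvd : ∀ x ∈ dilate d Δ, d ∣ x := by
    rintro x ⟨s, _, rfl⟩; exact ⟨s, rfl⟩
  have hdillb : ∀ x ∈ dilate d Δ, x ≠ 0 → d * m ≤ x := by
    rintro x ⟨s, hs, rfl⟩ hx0
    have : m ≤ s := hmle s hs (by rintro rfl; simp at hx0)
    exact Nat.mul_le_mul_left d this
  -- S is a submonoid
  have hsub : IsSubmonoidN S := by
    constructor
    · exact Or.inl ⟨0, h0Δ, by simp⟩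
    · rintro a b (⟨s, hs, rfl⟩ | ⟨ha1, ha2⟩) hb
      · rcases hb with ⟨t, ht, rfl⟩ | ⟨hb1, hb2⟩
        · exact Or.inl ⟨s + t, haddΔ s t hs ht, by ring⟩
        · refine Or.inr ⟨by omega, ?_⟩
          intro hdvd
          exact hb2 ((Nat.dvd_add_right ⟨s, rfl⟩).mp hdvd)
      · rcases hb with ⟨t, ht, rfl⟩ | ⟨hb1, hb2⟩
        · refine Or.inr ⟨by omega, ?_⟩
          intro hdvd
          rw [Nat.add_comm] at hdvd
          exact ha2 ((Nat.dvd_add_right ⟨t, rfl⟩).mp hdvd)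
        · by_cases hdvd : d ∣ a + b
          · obtain ⟨t, ht⟩ := hdvd
            refine Or.inl ⟨t, hbig t ?_, ht.symm⟩
            -- d*t = a+b > 2*d*C ≥ d*(C+1) > d*F, so t > F
            have h1 : d * C < d * t := by omega
            have := Nat.lt_of_mul_lt_mul_left h1
            omega
          · exact Or.inr ⟨by omega, hdvd⟩
  -- cofinite
  have hcof : (Sᶜ : Set ℕ).Finite := by
    apply Set.Finite.subset (Set.finite_Iio (d*C + 1))
    intro x hx
    simp only [Set.mem_Iio]
    by_contra hge
    apply hx
    by_cases hdvd : d ∣ x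
    · obtain ⟨t, rfl⟩ := hdvd
      have h1 : d * C < d * t := by omega
      exact Or.inl ⟨t, hbig t (by have := Nat.lt_of_mul_lt_mul_left h1; omega), rfl⟩
    · exact Or.inr ⟨by omega, hdvd⟩
  -- quotient
  have hquot : quotSet S d = Δ := by
    ext x
    simp only [quotSet, Set.mem_setOf_eq]
    constructor
    · rintro (⟨s, hs, hsx⟩ | ⟨_, h2⟩)
      · have : s = x := Nat.eq_of_mul_eq_mul_left hd0 hsx
        exact this ▸ hs
      · exact absurd ⟨x, rfl⟩ h2
    · intro hx
      exact Or.inl ⟨x, hx, rfl⟩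
  refine ⟨S, ⟨hsub, hcof⟩, hquot, ?_⟩
  -- the msg computation
  ext x
  simp only [Set.mem_diff, Finset.coe_filter, Finset.mem_Ioc, Set.mem_setOf_eq, Finset.mem_coe,
    Finset.mem_filter]
  constructor
  · rintro ⟨⟨hxS, hx0, hmin⟩, hxd⟩
    -- x ∈ S but not in dilate, so in the second part
    have hx2 : d*C < x ∧ ¬ d ∣ x := by
      rcases hxS with h | h
      · exact absurd h hxd
      · exact h
    refine ⟨⟨hx2.1, ?_⟩, hx2.2⟩
    -- show x ≤ d*C + d*m, else x = d*m + (x - d*m) splits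
    by_contra hgt
    push_neg at hgt
    have hdmS : d*m ∈ S := Or.inl ⟨m, hmΔ.1, rfl⟩
    have hbS : x - d*m ∈ S := by
      refine Or.inr ⟨by omega, ?_⟩
      intro hdvd
      apply hx2.2
      have : d ∣ (x - d*m) + d*m := Nat.dvd_add hdvd ⟨m, rfl⟩
      have hxe : (x - d*m) + d*m = x := by omega
      rwa [hxe] at this
    exact hmin (d*m) (x - d*m) hdmS hbS (by positivity) (by omega) (by omega)
  · rintro ⟨⟨h1, h2⟩, h3⟩
    have hxS : x ∈ S := Or.inr ⟨h1, h3⟩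
    refine ⟨⟨hxS, by omega, ?_⟩, ?_⟩
    · rintro a b haS hbS ha0 hb0 rfl
      rcases haS with haD | ⟨ha1, _⟩
      · rcases hbS with hbD | ⟨hb1, _⟩
        · exact h3 (Nat.dvd_add (hdildvd a haD) (hdildvd b hbD))
        · have := hdillb a haD ha0
          omega
      · rcases hbS with hbD | ⟨hb1, _⟩
        · have := hdillb b hbD hb0
          omega
        · -- both > d*C, sum > 2dC ≥ dC + dm ≥ x
          have : d * m ≤ d * C := Nat.mul_le_mul_left d hmC
          omega
    · intro hxd
      exact h3 (hdildvd x hxd)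

theorem stmt13 (Δ : Set ℕ) (hΔ : IsNumericalSemigroup Δ) (hne : Δ ≠ Set.univ)
    (d : ℕ) (hd : 2 ≤ d) (m : ℕ) (hm : m = multy Δ) :
    (∀ S : Set ℕ, IsNumericalSemigroup S → quotSet S d = Δ →
      (msg S \ dilate d Δ).ncard ≤ (d - 1) * m) ∧
    (∃ S : Set ℕ, IsNumericalSemigroup S ∧ quotSet S d = Δ ∧
      (msg S \ dilate d Δ).ncard = (d - 1) * m) := by
  -- basic facts about Δ
  have hd0 : 0 < d := by omega
  obtain ⟨⟨h0Δ, haddΔ⟩, hfinΔ⟩ := hΔ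
  have hbig : ∀ n, frob Δ < n → n ∈ Δ := by
    intro n hn
    by_contra hnot
    have : n ≤ frob Δ := le_csSup (hfinΔ.bddAbove) hnot
    omega
  have hMne : {x | x ∈ Δ ∧ x ≠ 0}.Nonempty := ⟨frob Δ + 1, hbig _ (by omega), by omega⟩
  have hmΔ : m ∈ Δ ∧ m ≠ 0 := hm ▸ Nat.sInf_mem hMne
  have hcard : ((Finset.range (d*m)).filter (fun r => ¬ d ∣ r)).card = (d-1)*m := by
    rw [aux_card_range_not_dvd d m hd0, Nat.sub_one_mul]
  constructor
  · intro S hS hq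
    calc (msg S \ dilate d Δ).ncard
        ≤ ((Finset.range (d*m)).filter (fun r => ¬ d ∣ r)).card :=
          aux_upper Δ d m hd hmΔ.1 hmΔ.2 S hS hq
      _ = (d-1)*m := hcard
  · obtain ⟨S, h1, h2, h3⟩ := aux_exists Δ ⟨⟨h0Δ, haddΔ⟩, hfinΔ⟩ hne d hd m hm
    refine ⟨S, h1, h2, ?_⟩
    rw [h3, Set.ncard_coe_finset, aux_card_Ioc_not_dvd d _ m hd0, Nat.sub_one_mul]
end

section
/- Let Δ ≠ ℕ be a numerical semigroup and d ≥ 2. A numerical semigroup S satisfies S/d = Δ and |msg(S) \ dΔ| = 1 if and only if there exists x ∈ Δ \ dΔ with gcd(x,d) = 1 such that S = ⟨x⟩ + dΔ; moreover in that case x = min(S \ dΔ). -/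
lemma aux_mul_mem {S : Set ℕ} (h : IsSubmonoidN S) (k x : ℕ) (hx : x ∈ S) :
    k * x ∈ S := by
  induction k with
  | zero => simpa using h.1
  | succ n ih =>
    have := h.2 _ _ ih hx
    simpa [Nat.succ_mul] using this

lemma aux_mem_sumset {x d : ℕ} {Δ : Set ℕ} {n : ℕ} :
    n ∈ setAdd (natMultiples x) (dilate d Δ) ↔ ∃ k δ, δ ∈ Δ ∧ n = k * x + d * δ := by
  constructor
  · rintro ⟨a, ⟨k, rfl⟩, b, ⟨δ, hδ, rfl⟩, rfl⟩
    exact ⟨k, δ, hδ, rfl⟩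
  · rintro ⟨k, δ, hδ, rfl⟩
    exact ⟨k * x, ⟨k, rfl⟩, d * δ, ⟨δ, hδ, rfl⟩, rfl⟩

lemma aux_sInf_sumset {Δ : Set ℕ} (h0 : 0 ∈ Δ) {d x : ℕ}
    (hx : x ∉ dilate d Δ) :
    x = sInf (setAdd (natMultiples x) (dilate d Δ) \ dilate d Δ) := by
  have hx0 : x ≠ 0 := by
    rintro rfl
    exact hx ⟨0, h0, by simp⟩
  have hxmem : x ∈ setAdd (natMultiples x) (dilate d Δ) \ dilate d Δ :=
    ⟨aux_mem_sumset.mpr ⟨1, 0, h0, by ring⟩, hx⟩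
  have hlb : ∀ m ∈ setAdd (natMultiples x) (dilate d Δ) \ dilate d Δ, x ≤ m := by
    rintro m ⟨hm, hmd⟩
    obtain ⟨k, δ, hδ, rfl⟩ := aux_mem_sumset.mp hm
    rcases Nat.eq_zero_or_pos k with rfl | hk
    · exact absurd ⟨δ, hδ, by ring⟩ hmd
    · have h1 : 1 * x ≤ k * x := Nat.mul_le_mul_right x hk
      omega
  exact le_antisymm (hlb _ (Nat.sInf_mem ⟨x, hxmem⟩)) (Nat.sInf_le hxmem)

lemma aux_msg_sumset {Δ : Set ℕ} (h0 : 0 ∈ Δ)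
    (hadd : ∀ a b : ℕ, a ∈ Δ → b ∈ Δ → a + b ∈ Δ) {d x : ℕ} (hd : 2 ≤ d)
    (hx : x ∉ dilate d Δ) :
    msg (setAdd (natMultiples x) (dilate d Δ)) \ dilate d Δ = {x} := by
  set T := setAdd (natMultiples x) (dilate d Δ) with hT
  have hx0 : x ≠ 0 := by
    rintro rfl
    exact hx ⟨0, h0, by simp⟩
  have hxT : x ∈ T := aux_mem_sumset.mpr ⟨1, 0, h0, by ring⟩
  ext m
  constructor
  · rintro ⟨⟨hmT, hm0, hmin⟩, hmd⟩
    obtain ⟨k, δ, hδ, rfl⟩ := aux_mem_sumset.mp hmT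
    rcases Nat.eq_zero_or_pos k with rfl | hk
    · exact absurd ⟨δ, hδ, by ring⟩ hmd
    obtain ⟨n, rfl⟩ : ∃ n, k = n + 1 := ⟨k - 1, by omega⟩
    by_cases hnδ : n = 0 ∧ δ = 0
    · obtain ⟨rfl, rfl⟩ := hnδ
      simp
    · have hrT : n * x + d * δ ∈ T := aux_mem_sumset.mpr ⟨n, δ, hδ, rfl⟩
      have hr0 : n * x + d * δ ≠ 0 := by
        rcases Nat.eq_zero_or_pos n with rfl | hn
        · have hδ0 : δ ≠ 0 := by tauto
          have : 0 < d * δ := Nat.mul_pos (by omega) (Nat.pos_of_ne_zero hδ0)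
          omega
        · have : 1 * x ≤ n * x := Nat.mul_le_mul_right x hn
          omega
      exact absurd (by ring : (n + 1) * x + d * δ = x + (n * x + d * δ))
        (hmin x _ hxT hrT hx0 hr0)
  · rintro rfl
    refine ⟨⟨hxT, hx0, ?_⟩, hx⟩
    intro a b ha hb ha0 hb0 heq
    obtain ⟨k1, δ1, hδ1, rfl⟩ := aux_mem_sumset.mp ha
    obtain ⟨k2, δ2, hδ2, rfl⟩ := aux_mem_sumset.mp hb
    by_cases hk : k1 = 0 ∧ k2 = 0
    · obtain ⟨rfl, rfl⟩ := hk
      refine hx ⟨δ1 + δ2, hadd _ _ hδ1 hδ2, ?_⟩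
      simp only [Nat.mul_add]
      omega
    · have hK : m = (k1 + k2) * m + (d * δ1 + d * δ2) := by
        rw [Nat.add_mul]
        omega
      rcases Nat.lt_or_ge (k1 + k2) 2 with hK2 | hK2
      · have hK1 : k1 + k2 = 1 := by omega
        rw [hK1, one_mul] at hK
        have hδz : d * δ1 = 0 ∧ d * δ2 = 0 := by omega
        have hδ10 : δ1 = 0 := by
          rcases Nat.mul_eq_zero.mp hδz.1 with h | h <;> omega
        have hδ20 : δ2 = 0 := by
          rcases Nat.mul_eq_zero.mp hδz.2 with h | h <;> omega
        subst hδ10; subst hδ20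
        rcases (by omega : k1 = 0 ∨ k2 = 0) with rfl | rfl
        · simp at ha0
        · simp at hb0
      · have h2 : 2 * m ≤ (k1 + k2) * m := Nat.mul_le_mul_right m hK2
        omega

theorem stmt15 (Δ : Set ℕ) (hΔ : IsNumericalSemigroup Δ) (hne : Δ ≠ Set.univ)
    (d : ℕ) (hd : 2 ≤ d) (S : Set ℕ) (hS : IsNumericalSemigroup S) :
    (quotSet S d = Δ ∧ (msg S \ dilate d Δ).ncard = 1) ↔
    (∃ x : ℕ, x ∈ Δ ∧ x ∉ dilate d Δ ∧ Nat.gcd x d = 1 ∧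
      S = setAdd (natMultiples x) (dilate d Δ) ∧ x = sInf (S \ dilate d Δ)) := by
  obtain ⟨hΔsub, hΔfin⟩ := hΔ
  obtain ⟨h0, hadd⟩ := hΔsub
  obtain ⟨hSsub, hSfin⟩ := hS
  constructor
  · rintro ⟨hquot, hcard⟩
    obtain ⟨x, hxset⟩ := Set.ncard_eq_one.mp hcard
    have hxmem : x ∈ msg S \ dilate d Δ := hxset ▸ rfl
    obtain ⟨⟨hxS, hx0, hxmin⟩, hxnd⟩ := hxmem
    have hdsub : dilate d Δ ⊆ S := by
      rintro _ ⟨δ, hδ, rfl⟩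
      rw [← hquot] at hδ
      exact hδ
    have hxΔ : x ∈ Δ := by
      rw [← hquot]
      exact aux_mul_mem ⟨(show 0 ∈ S from hSsub.1), hSsub.2⟩ d x hxS
    -- every element of S decomposes
    have hgen : ∀ s, s ∈ S → ∃ k δ, δ ∈ Δ ∧ s = k * x + d * δ := by
      intro s
      induction s using Nat.strong_induction_on with
      | _ s ih =>
        intro hs
        by_cases h0s : s = 0
        · exact ⟨0, 0, h0, by simp [h0s]⟩
        by_cases hmsg : ∀ a b : ℕ, a ∈ S → b ∈ S → a ≠ 0 → b ≠ 0 → s ≠ a + b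
        · by_cases hsd : s ∈ dilate d Δ
          · obtain ⟨δ, hδ, rfl⟩ := hsd
            exact ⟨0, δ, hδ, by ring⟩
          · have hsx : s ∈ msg S \ dilate d Δ := ⟨⟨hs, h0s, hmsg⟩, hsd⟩
            rw [hxset] at hsx
            have hsx' : s = x := hsx
            exact ⟨1, 0, h0, by simp [hsx']⟩
        · push_neg at hmsg
          obtain ⟨a, b, ha, hb, ha0, hb0, hab⟩ := hmsg
          obtain ⟨k1, δ1, hδ1, h1⟩ := ih a (by omega) ha
          obtain ⟨k2, δ2, hδ2, h2⟩ := ih b (by omega) hb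
          exact ⟨k1 + k2, δ1 + δ2, hadd _ _ hδ1 hδ2, by rw [hab, h1, h2]; ring⟩
    have hSeq : S = setAdd (natMultiples x) (dilate d Δ) := by
      ext n
      constructor
      · intro hn
        obtain ⟨k, δ, hδ, rfl⟩ := hgen n hn
        exact aux_mem_sumset.mpr ⟨k, δ, hδ, rfl⟩
      · intro hn
        obtain ⟨k, δ, hδ, rfl⟩ := aux_mem_sumset.mp hn
        exact hSsub.2 _ _ (aux_mul_mem ⟨hSsub.1, hSsub.2⟩ k x hxS) (hdsub ⟨δ, hδ, rfl⟩)
    have hgcd : Nat.gcd x d = 1 := by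
      by_contra hg
      have hgpos : 0 < Nat.gcd x d := Nat.gcd_pos_of_pos_right x (by omega)
      have hg2 : 2 ≤ Nat.gcd x d := by omega
      set g := Nat.gcd x d with hgdef
      have hsubg : S ⊆ {n | g ∣ n} := by
        intro n hn
        obtain ⟨k, δ, hδ, rfl⟩ := hgen n hn
        exact Nat.dvd_add (Dvd.dvd.mul_left (Nat.gcd_dvd_left x d) k)
          (Dvd.dvd.mul_right (Nat.gcd_dvd_right x d) δ)
      have hsub2 : {n : ℕ | n % g = 1} ⊆ Sᶜ := by
        intro n hn hnS
        obtain ⟨c, rfl⟩ := hsubg hnS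
        have := Nat.mul_mod_right g c
        simp only [Set.mem_setOf_eq] at hn
        omega
      have hinf : {n : ℕ | n % g = 1}.Infinite := by
        refine Set.infinite_of_injective_forall_mem (f := fun k : ℕ => 1 + k * g) ?_ ?_
        · intro a b hab
          simp only at hab
          have : a * g = b * g := by omega
          exact Nat.eq_of_mul_eq_mul_right hgpos this
        · intro k
          simp only [Set.mem_setOf_eq]
          rw [Nat.add_mul_mod_self_right]
          exact Nat.mod_eq_of_lt (by omega)
      exact hinf (hSfin.subset hsub2)
    refine ⟨x, hxΔ, hxnd, hgcd, hSeq, ?_⟩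
    rw [hSeq]
    exact aux_sInf_sumset h0 hxnd
  · rintro ⟨x, hxΔ, hxnd, hgcd, hSeq, hxinf⟩
    have hquot : quotSet S d = Δ := by
      ext y
      constructor
      · intro hy
        have hy' : d * y ∈ S := hy
        rw [hSeq] at hy'
        obtain ⟨k, δ, hδ, heq⟩ := aux_mem_sumset.mp hy'
        have hdvd : d ∣ k * x := by
          have h1 : d ∣ d * y := ⟨y, rfl⟩
          have h2 : d ∣ d * δ := ⟨δ, rfl⟩
          have h3 : k * x = d * y - d * δ := by omega
          rw [h3]
          exact Nat.dvd_sub h1 h2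
        have hdk : d ∣ k :=
          (Nat.coprime_comm.mp hgcd).dvd_of_dvd_mul_right hdvd
        obtain ⟨k', rfl⟩ := hdk
        have hy2 : y = k' * x + δ := by
          have : d * y = d * (k' * x + δ) := by rw [heq]; ring
          exact Nat.eq_of_mul_eq_mul_left (by omega) this
        rw [hy2]
        exact hadd _ _ (aux_mul_mem ⟨h0, hadd⟩ k' x hxΔ) hδ
      · intro hy
        show d * y ∈ S
        rw [hSeq]
        exact aux_mem_sumset.mpr ⟨0, y, hy, by ring⟩
    refine ⟨hquot, ?_⟩
    rw [hSeq, aux_msg_sumset h0 hadd hd hxnd]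
    exact Set.ncard_singleton x
end

section
/- Let Δ be a numerical semigroup, d ≥ 2, and x ∈ Δ with gcd(x,d) = 1. Then S = ⟨x⟩ + dΔ = {k·x + d·δ : k ∈ ℕ, δ ∈ Δ} is a numerical semigroup with S/d = Δ. -/
theorem stmt16 (Δ : Set ℕ) (hΔ : IsNumericalSemigroup Δ) (d : ℕ) (hd : 2 ≤ d)
    (x : ℕ) (hx : x ∈ Δ) (hgcd : Nat.gcd x d = 1) :
    IsNumericalSemigroup (setAdd (natMultiples x) (dilate d Δ)) ∧
    quotSet (setAdd (natMultiples x) (dilate d Δ)) d = Δ := by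
  obtain ⟨⟨h0, hadd⟩, hfin⟩ := hΔ
  set S := setAdd (natMultiples x) (dilate d Δ) with hS
  -- multiples of x are in Δ
  have hmul : ∀ k : ℕ, k * x ∈ Δ := by
    intro k
    induction k with
    | zero => simpa using h0
    | succ n ih => rw [Nat.succ_mul]; exact hadd _ _ ih hx
  -- membership criterion for S
  have hmem : ∀ n, n ∈ S ↔ ∃ k δ, δ ∈ Δ ∧ n = k * x + d * δ := by
    intro n
    constructor
    · rintro ⟨a, ⟨k, rfl⟩, b, ⟨δ, hδ, rfl⟩, rfl⟩
      exact ⟨k, δ, hδ, rfl⟩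
    · rintro ⟨k, δ, hδ, rfl⟩
      exact ⟨k * x, ⟨k, rfl⟩, d * δ, ⟨δ, hδ, rfl⟩, rfl⟩
  have hdpos : 0 < d := by omega
  haveI : NeZero d := ⟨by omega⟩
  -- Δ contains all large numbers
  obtain ⟨N, hN⟩ := hfin.bddAbove
  have hΔlarge : ∀ n, N < n → n ∈ Δ := by
    intro n hn
    by_contra h
    exact absurd (hN h) (by omega)
  -- S contains all large numbers
  have hSlarge : ∀ n, (d - 1) * x + d * (N + 1) ≤ n → n ∈ S := by
    intro n hn
    have hxu : IsUnit (x : ZMod d) := by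
      rw [ZMod.isUnit_iff_coprime]
      exact hgcd
    set k : ℕ := ((n : ZMod d) * ((x : ZMod d)⁻¹)).val with hk
    have hklt : k < d := ZMod.val_lt _
    have hkx : k * x ≤ n := by
      have : k * x ≤ (d - 1) * x := Nat.mul_le_mul_right _ (by omega)
      omega
    have hdvd : d ∣ n - k * x := by
      have : ((n - k * x : ℕ) : ZMod d) = 0 := by
        rw [Nat.cast_sub hkx]
        push_cast
        rw [hk, ZMod.natCast_val, ZMod.cast_id, mul_assoc,
          ZMod.inv_mul_of_unit _ hxu, mul_one, sub_self]
      exact (ZMod.natCast_eq_zero_iff _ _).mp this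
    obtain ⟨m, hm⟩ := hdvd
    have hmem' : n = k * x + d * m := by omega
    have hmN : N < m := by
      have : d * (N + 1) ≤ d * m := by
        have : k * x ≤ (d - 1) * x := Nat.mul_le_mul_right _ (by omega)
        omega
      have := Nat.le_of_mul_le_mul_left this hdpos
      omega
    exact (hmem n).mpr ⟨k, m, hΔlarge m hmN, hmem'⟩
  constructor
  · constructor
    · constructor
      · exact (hmem 0).mpr ⟨0, 0, h0, by ring⟩
      · intro a b ha hb
        obtain ⟨k1, d1, hd1, rfl⟩ := (hmem a).mp ha
        obtain ⟨k2, d2, hd2, rfl⟩ := (hmem b).mp hb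
        exact (hmem _).mpr ⟨k1 + k2, d1 + d2, hadd _ _ hd1 hd2, by ring⟩
    · apply Set.Finite.subset (Set.finite_Icc 0 ((d - 1) * x + d * (N + 1)))
      intro n hn
      simp only [Set.mem_compl_iff] at hn
      simp only [Set.mem_Icc]
      constructor
      · omega
      · by_contra h
        exact hn (hSlarge n (by omega))
  · ext y
    simp only [quotSet, Set.mem_setOf_eq]
    constructor
    · intro hy
      obtain ⟨k, δ, hδ, heq⟩ := (hmem _).mp hy
      have hδy : δ ≤ y := by nlinarith
      have hdk : d ∣ k * x := ⟨y - δ, by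
        rw [Nat.mul_sub] ; omega⟩
      have hdk' : d ∣ k := (Nat.Coprime.dvd_of_dvd_mul_right
        (Nat.coprime_comm.mp hgcd) hdk)
      obtain ⟨k', rfl⟩ := hdk'
      have hy' : y = k' * x + δ := by
        have : d * y = d * (k' * x + δ) := by rw [heq]; ring
        exact Nat.eq_of_mul_eq_mul_left hdpos this
      rw [hy']
      exact hadd _ _ (hmul k') hδ
    · intro hy
      exact (hmem _).mpr ⟨0, y, hy, by ring⟩
end

section
/- Let Δ ≠ ℕ be a numerical semigroup, d ≥ 2, and x ∈ Δ with gcd(x,d) = 1. Then the Frobenius number of S = ⟨x⟩ + dΔ is F(S) = d·F(Δ) + (d−1)·x. -/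
lemma addmul_mem (Δ : Set ℕ) (hΔ : IsSubmonoidN Δ) (x : ℕ) (hx : x ∈ Δ)
    (δ : ℕ) (hδ : δ ∈ Δ) (m : ℕ) : δ + m * x ∈ Δ := by
  induction m with
  | zero => simpa using hδ
  | succ n ih =>
    have := hΔ.2 _ _ ih hx
    have h : δ + (n+1) * x = (δ + n * x) + x := by ring
    rw [h]; exact this

theorem stmt17 (Δ : Set ℕ) (hΔ : IsNumericalSemigroup Δ) (hne : Δ ≠ Set.univ)
    (d : ℕ) (hd : 2 ≤ d) (x : ℕ) (hx : x ∈ Δ) (hgcd : Nat.gcd x d = 1) :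
    frob (setAdd (natMultiples x) (dilate d Δ)) = d * frob Δ + (d - 1) * x := by
  set F := frob Δ with hF
  have hdpos : 0 < d := by omega
  haveI : NeZero d := ⟨by omega⟩
  -- basic properties of F
  have hcne : (Δᶜ : Set ℕ).Nonempty := by
    rcases Set.nonempty_compl.mpr hne with ⟨a, ha⟩; exact ⟨a, ha⟩
  have hbdd : BddAbove (Δᶜ : Set ℕ) := hΔ.2.bddAbove
  have hFmem : F ∈ (Δᶜ : Set ℕ) := Nat.sSup_mem hcne hbdd
  have hFnot : F ∉ Δ := hFmem
  have hgt : ∀ n, F < n → n ∈ Δ := by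
    intro n hn
    by_contra hno
    have h : n ≤ F := le_csSup hbdd hno
    omega
  -- membership in S
  set S := setAdd (natMultiples x) (dilate d Δ) with hS
  have hmemS : ∀ n, n ∈ S ↔ ∃ k δ, δ ∈ Δ ∧ n = k * x + d * δ := by
    intro n
    constructor
    · rintro ⟨a, ⟨k, rfl⟩, b, ⟨δ, hδ, rfl⟩, rfl⟩
      exact ⟨k, δ, hδ, rfl⟩
    · rintro ⟨k, δ, hδ, rfl⟩
      exact ⟨k * x, ⟨k, rfl⟩, d * δ, ⟨δ, hδ, rfl⟩, rfl⟩
  -- the target is not in S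
  have hT_not : d * F + (d - 1) * x ∉ S := by
    rw [hmemS]
    rintro ⟨k, δ, hδ, heq⟩
    have hcop : IsCoprime (d : ℤ) (x : ℤ) := by
      rw [Int.isCoprime_iff_gcd_eq_one, Int.gcd_natCast_natCast, Nat.gcd_comm]
      exact hgcd
    have heqZ : (d : ℤ) * F + ((d:ℤ) - 1) * x = k * x + d * δ := by
      have h1 : (1:ℕ) ≤ d := by omega
      have h2 := congrArg (fun t : ℕ => (t : ℤ)) heq
      push_cast [Nat.cast_sub h1] at h2
      linarith [h2]
    have hdvd : (d : ℤ) ∣ ((k : ℤ) - (d - 1)) * x := by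
      refine ⟨(F : ℤ) - δ, ?_⟩
      linarith [heqZ]
    have hdvd2 : (d : ℤ) ∣ ((k : ℤ) - (d - 1)) := hcop.dvd_of_dvd_mul_right hdvd
    rcases hdvd2 with ⟨m, hm⟩
    have hFδ : (F : ℤ) - δ = m * x := by
      have hdz : (d : ℤ) ≠ 0 := by exact_mod_cast (by omega : d ≠ 0)
      have : (d : ℤ) * ((F : ℤ) - δ) = (d : ℤ) * (m * x) := by
        have : ((k : ℤ) - (d - 1)) * x = (d * m) * x := by rw [← hm]
        nlinarith [heqZ, this]
      exact mul_left_cancel₀ hdz this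
    by_cases hm0 : 0 ≤ m
    · lift m to ℕ using hm0 with m'
      have : F = δ + m' * x := by
        have : (F : ℤ) = (δ : ℤ) + m' * x := by linarith [hFδ]
        exact_mod_cast this
      exact hFnot (this ▸ addmul_mem Δ hΔ.1 x hx δ hδ m')
    · have hk0 : (0 : ℤ) ≤ k := Int.natCast_nonneg k
      have : (k : ℤ) = (d : ℤ) - 1 + d * m := by linarith [hm]
      have hdm : (d : ℤ) * m ≤ -d := by
        have : m ≤ -1 := by omega
        nlinarith [this, (by exact_mod_cast hdpos : (0:ℤ) < d)]
      omega
  -- everything above the target is in S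
  have hT_abv : ∀ n, d * F + (d - 1) * x < n → n ∈ S := by
    intro n hn
    set k : ℕ := ((n : ZMod d) * (x : ZMod d)⁻¹).val with hk
    have hklt : k < d := ZMod.val_lt _
    have hux : IsUnit (x : ZMod d) := by
      rw [ZMod.isUnit_iff_coprime]; exact hgcd
    have hcast : ((k * x : ℕ) : ZMod d) = (n : ZMod d) := by
      rw [Nat.cast_mul, hk, ZMod.natCast_val, ZMod.cast_id, mul_assoc,
        ZMod.inv_mul_of_unit _ hux, mul_one]
    have hkx_le : k * x ≤ n := by
      have : k * x ≤ (d - 1) * x := Nat.mul_le_mul_right x (by omega)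
      omega
    have hdvd : d ∣ n - k * x := by
      have : ((n - k * x : ℕ) : ZMod d) = 0 := by
        rw [Nat.cast_sub hkx_le, hcast, sub_self]
      exact (ZMod.natCast_eq_zero_iff _ _).mp this
    rcases hdvd with ⟨δ, hδeq⟩
    have hδΔ : δ ∈ Δ := by
      apply hgt
      have h1 : d * F < d * δ := by
        have : k * x ≤ (d - 1) * x := Nat.mul_le_mul_right x (by omega)
        omega
      exact lt_of_mul_lt_mul_left h1 (Nat.zero_le d)
    rw [hmemS]
    exact ⟨k, δ, hδΔ, by omega⟩
  -- conclude
  have : IsGreatest (Sᶜ : Set ℕ) (d * F + (d - 1) * x) := by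
    constructor
    · exact hT_not
    · intro n hn
      by_contra hno
      exact hn (hT_abv n (by omega))
  exact this.csSup_eq
end

section
/- Let Δ ≠ ℕ be a numerical semigroup, d ≥ 2, and x ∈ Δ with gcd(x,d) = 1. Then the genus of S = ⟨x⟩ + dΔ is g(S) = d·g(Δ) + (d−1)(x−1)/2. -/
lemma mem_S_iff {Δ : Set ℕ} {d x n : ℕ} :
    n ∈ setAdd (natMultiples x) (dilate d Δ) ↔ ∃ k t, t ∈ Δ ∧ n = k * x + d * t := by
  constructor
  · rintro ⟨a, ⟨k, rfl⟩, b, ⟨t, ht, rfl⟩, rfl⟩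
    exact ⟨k, t, ht, rfl⟩
  · rintro ⟨k, t, ht, rfl⟩
    exact ⟨k*x, ⟨k, rfl⟩, d*t, ⟨t, ht, rfl⟩, rfl⟩

lemma mulx_mem {Δ : Set ℕ} (h : IsSubmonoidN Δ) {x : ℕ} (hx : x ∈ Δ) (k : ℕ) : k * x ∈ Δ := by
  induction k with
  | zero => simpa using h.1
  | succ k ih => rw [Nat.succ_mul]; exact h.2 _ _ ih hx

lemma mod_eq_of_mul_modEq {d x k k' : ℕ} (hgcd : Nat.gcd x d = 1) (hk : k < d)
    (h : k' * x ≡ k * x [MOD d]) : k' % d = k := by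
  have h2 : k' % d = k % d :=
    Nat.ModEq.cancel_right_of_coprime (by rwa [Nat.gcd_comm] at hgcd) h
  rwa [Nat.mod_eq_of_lt hk] at h2

lemma keyB {Δ : Set ℕ} {d x k n : ℕ} (hgcd : Nat.gcd x d = 1) (hk : k < d)
    (hn : n < k * x) (hmod : n ≡ k * x [MOD d]) :
    n ∉ setAdd (natMultiples x) (dilate d Δ) := by
  intro hS
  obtain ⟨k', t, ht, rfl⟩ := mem_S_iff.mp hS
  have hmc : k' * x ≡ k * x [MOD d] := by
    calc k' * x ≡ k' * x + d * t [MOD d] :=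
          (Nat.modEq_iff_dvd' (Nat.le_add_right _ _)).mpr ⟨t, by omega⟩
    _ ≡ k * x [MOD d] := hmod
  have hkk : k' % d = k := mod_eq_of_mul_modEq hgcd hk hmc
  have h1 : k ≤ k' := hkk ▸ Nat.mod_le k' d
  have : k * x ≤ k' * x := Nat.mul_le_mul_right _ h1
  omega

lemma keyA {Δ : Set ℕ} (hsub : IsSubmonoidN Δ) {d x k : ℕ} (hx : x ∈ Δ)
    (hgcd : Nat.gcd x d = 1) (hd : 0 < d) (hk : k < d) (t : ℕ) :
    k * x + d * t ∈ setAdd (natMultiples x) (dilate d Δ) ↔ t ∈ Δ := by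
  constructor
  · intro hS
    obtain ⟨k', δ, hδ, heq⟩ := mem_S_iff.mp hS
    have hmc : k' * x ≡ k * x [MOD d] := by
      calc k' * x ≡ k' * x + d * δ [MOD d] :=
            (Nat.modEq_iff_dvd' (Nat.le_add_right _ _)).mpr ⟨δ, by omega⟩
      _ = k * x + d * t := heq.symm
      _ ≡ k * x [MOD d] :=
            ((Nat.modEq_iff_dvd' (Nat.le_add_right _ _)).mpr ⟨t, by omega⟩).symm
    have hkk : k' % d = k := mod_eq_of_mul_modEq hgcd hk hmc
    have hdm := Nat.div_add_mod k' d
    set j := k' / d with hj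
    have hk' : k' = d * j + k := by omega
    have ht : t = j * x + δ := by
      rw [hk'] at heq
      have hr : (d * j + k) * x + d * δ = k * x + (d * (j * x) + d * δ) := by ring
      have h2 : d * t = d * (j * x) + d * δ := by omega
      rw [← Nat.mul_add] at h2
      exact Nat.eq_of_mul_eq_mul_left hd h2
    rw [ht]
    exact hsub.2 _ _ (mulx_mem hsub hx j) hδ
  · intro ht
    exact mem_S_iff.mpr ⟨k, t, ht, rfl⟩

lemma modmul_injOn {d x : ℕ} (hgcd : Nat.gcd x d = 1) :
    ∀ a ∈ Finset.range d, ∀ b ∈ Finset.range d, a * x % d = b * x % d → a = b := by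
  intro a ha b hb hab
  simp only [Finset.mem_range] at ha hb
  have h : a ≡ b [MOD d] :=
    Nat.ModEq.cancel_right_of_coprime (by rwa [Nat.gcd_comm] at hgcd) hab
  have : a % d = b % d := h
  rwa [Nat.mod_eq_of_lt ha, Nat.mod_eq_of_lt hb] at this

lemma sum_floor {d x : ℕ} (hgcd : Nat.gcd x d = 1) (hd : 2 ≤ d) :
    ∑ k ∈ Finset.range d, (k * x / d) = (d - 1) * (x - 1) / 2 := by
  have hd0 : 0 < d := by omega
  have hx0 : x ≠ 0 := by rintro rfl; simp [Nat.gcd_comm] at hgcd; omega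
  have himg : (Finset.range d).image (fun k => k * x % d) = Finset.range d := by
    apply Finset.eq_of_subset_of_card_le
    · intro m hm
      simp only [Finset.mem_image, Finset.mem_range] at hm ⊢
      obtain ⟨k, _, rfl⟩ := hm
      exact Nat.mod_lt _ hd0
    · rw [Finset.card_image_of_injOn (modmul_injOn hgcd)]
  have h1 : ∑ k ∈ Finset.range d, (k * x % d) = ∑ k ∈ Finset.range d, k := by
    conv_rhs => rw [← himg]
    rw [Finset.sum_image (modmul_injOn hgcd)]
  have h2 : ∀ k, k * x = d * (k * x / d) + k * x % d := fun k => (Nat.div_add_mod _ _).symm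
  have h3 : (∑ k ∈ Finset.range d, k) * x
      = d * (∑ k ∈ Finset.range d, (k * x / d)) + ∑ k ∈ Finset.range d, k := by
    rw [Finset.sum_mul, Finset.mul_sum, ← h1, ← Finset.sum_add_distrib]
    exact Finset.sum_congr rfl fun k _ => h2 k
  set S := ∑ k ∈ Finset.range d, (k * x / d) with hS
  set T := ∑ k ∈ Finset.range d, k with hT
  have hT2 : T * 2 = d * (d - 1) := Finset.sum_range_id_mul_two d
  -- from h3: T * x = d * S + T; multiply by 2: d*(d-1)*x = 2*d*S + d*(d-1)
  have h4 : d * ((d - 1) * x) = d * (2 * S + (d - 1)) := by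
    have : T * x * 2 = (d * S + T) * 2 := by rw [h3]
    calc d * ((d - 1) * x) = T * 2 * x := by rw [hT2]; ring
    _ = (d * S + T) * 2 := by rw [← this]; ring
    _ = d * (2 * S) + T * 2 := by ring
    _ = d * (2 * S + (d - 1)) := by rw [hT2]; ring
  have h5 : (d - 1) * x = 2 * S + (d - 1) := Nat.eq_of_mul_eq_mul_left hd0 h4
  have h6 : (d - 1) * x = (d - 1) * (x - 1) + (d - 1) := by
    rcases x with _ | y
    · omega
    · simp only [Nat.succ_sub_one]; ring
  omega

-- residue existence: for n, find k < d with k*x ≡ n [MOD d]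
lemma exists_res {d x : ℕ} (hgcd : Nat.gcd x d = 1) (hd : 2 ≤ d) (n : ℕ) :
    ∃ k < d, k * x ≡ n [MOD d] := by
  haveI : NeZero d := ⟨by omega⟩
  haveI : Fact (1 < d) := ⟨by omega⟩
  have hu : IsUnit ((x : ZMod d)) := (ZMod.isUnit_iff_coprime x d).mpr hgcd
  refine ⟨((n : ZMod d) * (x : ZMod d)⁻¹).val, ZMod.val_lt _, ?_⟩
  rw [← ZMod.natCast_eq_natCast_iff]
  push_cast
  rw [ZMod.natCast_val, ZMod.cast_id, mul_assoc, ZMod.inv_mul_of_unit _ hu, mul_one]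

theorem stmt18 (Δ : Set ℕ) (hΔ : IsNumericalSemigroup Δ) (hne : Δ ≠ Set.univ)
    (d : ℕ) (hd : 2 ≤ d) (x : ℕ) (hx : x ∈ Δ) (hgcd : Nat.gcd x d = 1) :
    genus (setAdd (natMultiples x) (dilate d Δ)) = d * genus Δ + (d - 1) * (x - 1) / 2 := by
  have hd0 : 0 < d := by omega
  set S := setAdd (natMultiples x) (dilate d Δ) with hSdef
  set G : Finset ℕ := hΔ.2.toFinset with hGdef
  set F : ℕ → Finset ℕ := fun k =>
    ((Finset.range (k * x / d)).image (fun j => k * x % d + d * j)) ∪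
      (G.image (fun t => k * x + d * t)) with hFdef
  -- elements of each part
  have hlt : ∀ k j, j < k * x / d → k * x % d + d * j < k * x := by
    intro k j hj
    have h1 := Nat.mod_add_div (k * x) d
    have h2 : d * j < d * (k * x / d) := by
      exact (mul_lt_mul_iff_right₀ hd0).mpr hj
    omega
  -- Step 1: complement = biUnion
  have hcomp : (Sᶜ : Set ℕ) = ↑((Finset.range d).biUnion F) := by
    ext n
    simp only [Set.mem_compl_iff, Finset.mem_coe, Finset.mem_biUnion, Finset.mem_range]
    constructor
    · intro hn
      obtain ⟨k, hk, hmod⟩ := exists_res hgcd hd n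
      refine ⟨k, hk, ?_⟩
      simp only [hFdef]
      have hmodn : n % d = k * x % d := hmod.symm
      rcases lt_or_ge n (k * x) with hlt' | hge
      · apply Finset.mem_union_left
        simp only [Finset.mem_image, Finset.mem_range]
        refine ⟨n / d, ?_, by rw [← hmodn]; exact Nat.mod_add_div n d⟩
        have h1 := Nat.mod_add_div n d
        have h2 := Nat.mod_add_div (k * x) d
        have h3 : d * (n / d) < d * (k * x / d) := by omega
        exact Nat.lt_of_mul_lt_mul_left h3
      · apply Finset.mem_union_right
        obtain ⟨c, hc⟩ := (Nat.modEq_iff_dvd' hge).mp hmod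
        simp only [Finset.mem_image]
        refine ⟨c, ?_, by omega⟩
        rw [hGdef, Set.Finite.mem_toFinset, Set.mem_compl_iff]
        intro hcΔ
        exact hn (by rw [show n = k * x + d * c by omega]; exact (keyA hΔ.1 hx hgcd hd0 hk c).mpr hcΔ)
    · rintro ⟨k, hk, hmem⟩
      simp only [hFdef] at hmem
      rcases Finset.mem_union.mp hmem with h | h
      · simp only [Finset.mem_image, Finset.mem_range] at h
        obtain ⟨j, hj, rfl⟩ := h
        refine keyB hgcd hk (hlt k j hj) ?_
        show (k * x % d + d * j) % d = k * x % d
        simp [Nat.add_mul_mod_self_left]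
      · simp only [Finset.mem_image] at h
        obtain ⟨t, ht, rfl⟩ := h
        rw [hGdef, Set.Finite.mem_toFinset, Set.mem_compl_iff] at ht
        exact fun hmem' => ht ((keyA hΔ.1 hx hgcd hd0 hk t).mp hmem')
  -- residues of elements of F k
  have hres : ∀ k, ∀ n ∈ F k, n % d = k * x % d := by
    intro k n hn
    simp only [hFdef] at hn
    rcases Finset.mem_union.mp hn with h | h
    · obtain ⟨j, _, rfl⟩ := by simpa only [Finset.mem_image, Finset.mem_range] using h
      simp [Nat.add_mul_mod_self_left]
    · obtain ⟨t, _, rfl⟩ := by simpa only [Finset.mem_image] using h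
      simp [Nat.add_mul_mod_self_left]
  -- Step 2: disjointness and card
  have hdisj : ∀ k ∈ Finset.range d, ∀ l ∈ Finset.range d, k ≠ l → Disjoint (F k) (F l) := by
    intro k hk l hl hkl
    rw [Finset.disjoint_left]
    intro n hnk hnl
    exact hkl (modmul_injOn hgcd k hk l hl (by rw [← hres k n hnk, ← hres l n hnl]))
  have hcardF : ∀ k, (F k).card = k * x / d + genus Δ := by
    intro k
    simp only [hFdef]
    rw [Finset.card_union_of_disjoint]
    · congr 1
      · rw [Finset.card_image_of_injOn, Finset.card_range]
        intro a _ b _ hab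
        dsimp only at hab
        have : d * a = d * b := by omega
        exact Nat.eq_of_mul_eq_mul_left hd0 this
      · rw [Finset.card_image_of_injOn]
        · rw [genus, Set.ncard_eq_toFinset_card _ hΔ.2]
        · intro a _ b _ hab
          dsimp only at hab
          have : d * a = d * b := by omega
          exact Nat.eq_of_mul_eq_mul_left hd0 this
    · rw [Finset.disjoint_left]
      intro n hn1 hn2
      simp only [Finset.mem_image, Finset.mem_range] at hn1 hn2
      obtain ⟨j, hj, rfl⟩ := hn1
      obtain ⟨t, _, heq⟩ := hn2
      have := hlt k j hj
      omega
  -- finish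
  rw [genus, hcomp, Set.ncard_coe_finset, Finset.card_biUnion hdisj]
  calc ∑ k ∈ Finset.range d, (F k).card
      = ∑ k ∈ Finset.range d, (k * x / d + genus Δ) := Finset.sum_congr rfl fun k _ => hcardF k
    _ = ∑ k ∈ Finset.range d, (k * x / d) + d * genus Δ := by
        rw [Finset.sum_add_distrib, Finset.sum_const, Finset.card_range, smul_eq_mul]
    _ = d * genus Δ + (d - 1) * (x - 1) / 2 := by rw [sum_floor hgcd hd]; ring
end

section
/- Let Δ ≠ ℕ be a numerical semigroup, d ≥ 2, and x ∈ Δ with gcd(x,d) = 1, and set S = ⟨x⟩ + dΔ. Then PF(S) = {d·f + (d−1)·x : f ∈ PF(Δ)}; in particular the type t(S) = t(Δ), and S is symmetric if and only if Δ is symmetric. -/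
namespace Stmt19Aux

lemma nat_mul_mem {Δ : Set ℕ} (hΔ : IsSubmonoidN Δ) {x : ℕ} (hx : x ∈ Δ) :
    ∀ k : ℕ, k * x ∈ Δ := by
  intro k
  induction k with
  | zero => simpa using hΔ.1
  | succ n ih =>
    have h2 := hΔ.2 _ _ ih hx
    have h : (n + 1) * x = n * x + x := by ring
    rwa [h]

lemma memS {Δ : Set ℕ} (hΔ : IsSubmonoidN Δ) {d x : ℕ} (hd : 2 ≤ d) (hx : x ∈ Δ)
    (n : ℕ) :
    n ∈ setAdd (natMultiples x) (dilate d Δ) ↔ ∃ k, k < d ∧ ∃ δ ∈ Δ, n = k * x + d * δ := by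
  constructor
  · rintro ⟨a, ⟨j, rfl⟩, b, ⟨δ, hδ, rfl⟩, rfl⟩
    refine ⟨j % d, Nat.mod_lt _ (by omega), j / d * x + δ, hΔ.2 _ _ (nat_mul_mem hΔ hx _) hδ, ?_⟩
    have h := Nat.div_add_mod j d
    calc j * x + d * δ = (d * (j/d) + j % d) * x + d * δ := by rw [h]
      _ = j % d * x + d * (j / d * x + δ) := by ring
  · rintro ⟨k, hk, δ, hδ, rfl⟩
    exact ⟨k * x, ⟨k, rfl⟩, d * δ, ⟨δ, hδ, rfl⟩, rfl⟩

lemma resuniq {x d : ℕ} (hgcd : Nat.gcd x d = 1) {k1 k2 : ℕ} (h1 : k1 < d) (h2 : k2 < d)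
    (h : (d : ℤ) ∣ ((k1 : ℤ) - (k2 : ℤ)) * (x : ℤ)) : k1 = k2 := by
  have hco : IsCoprime (d : ℤ) (x : ℤ) := by
    rw [Int.isCoprime_iff_gcd_eq_one]
    simpa [Int.gcd, Nat.gcd_comm] using hgcd
  have hdvd : (d : ℤ) ∣ ((k1 : ℤ) - (k2 : ℤ)) := hco.dvd_of_dvd_mul_right h
  have h4 : d ∣ ((k1 : ℤ) - (k2 : ℤ)).natAbs := by
    have := Int.natAbs_dvd_natAbs.mpr hdvd
    simpa using this
  have h5 : ((k1 : ℤ) - (k2 : ℤ)).natAbs < d := by omega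
  have h6 := Nat.eq_zero_of_dvd_of_lt h4 h5
  omega

lemma main_eq {Δ : Set ℕ} (hΔ : IsNumericalSemigroup Δ)
    {d : ℕ} (hd : 2 ≤ d) {x : ℕ} (hx : x ∈ Δ) (hgcd : Nat.gcd x d = 1) (hx0 : x ≠ 0) :
    PF (setAdd (natMultiples x) (dilate d Δ)) =
      (fun f => (d : ℤ) * f + ((d : ℤ) - 1) * (x : ℤ)) '' PF Δ := by
  set S := setAdd (natMultiples x) (dilate d Δ) with hSdef
  have hmem : ∀ n : ℕ, n ∈ S ↔ ∃ k, k < d ∧ ∃ δ ∈ Δ, n = k * x + d * δ :=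
    memS hΔ.1 hd hx
  have hd1 : ((d - 1 : ℕ) : ℤ) = (d : ℤ) - 1 := by omega
  have hdlt : d - 1 < d := by omega
  have hd0 : (d : ℤ) ≠ 0 := by exact_mod_cast (by omega : d ≠ 0)
  ext z
  simp only [Set.mem_image]
  constructor
  · rintro ⟨hz1, hz2⟩
    have hxS : x ∈ S := (hmem x).2 ⟨1, by omega, 0, hΔ.1.1, by ring⟩
    have hdxS : d * x ∈ S := (hmem _).2 ⟨0, by omega, x, hx, by ring⟩
    obtain ⟨m2, hm2S, hm2⟩ := hz2 (d * x) hdxS (Nat.mul_ne_zero (by omega) hx0)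
    push_cast at hm2
    obtain ⟨k, hk, δ, hδ, hm2e⟩ := (hmem m2).1 hm2S
    have e2 : (m2 : ℤ) = (k : ℤ) * x + (d : ℤ) * δ := by exact_mod_cast hm2e
    have hkd : k = d - 1 := by
      by_contra hne'
      have hklt : k + 1 < d := by omega
      obtain ⟨m1, hm1S, hm1⟩ := hz2 x hxS hx0
      obtain ⟨k', hk', δ', hδ', hm1e⟩ := (hmem m1).1 hm1S
      have e1 : (m1 : ℤ) = (k' : ℤ) * x + (d : ℤ) * δ' := by exact_mod_cast hm1e
      have hdvd : (d : ℤ) ∣ ((k' : ℤ) - ((k + 1 : ℕ) : ℤ)) * (x : ℤ) := by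
        have hc : ((k + 1 : ℕ) : ℤ) = (k : ℤ) + 1 := by push_cast; ring
        rw [hc]
        exact ⟨(δ : ℤ) - δ' - x, by linear_combination -e1 + hm1 - hm2 + e2⟩
      have hkk := resuniq hgcd hk' hklt hdvd
      subst hkk
      have h5 : (k + 1) * x = k * x + x := by ring
      have hxm1 : x ≤ m1 := by omega
      apply hz1 (m1 - x) (by omega)
      exact (hmem _).2 ⟨k, by omega, δ', hδ', by omega⟩
    subst hkd
    rw [hd1] at e2
    have hzeq : z = (d : ℤ) * δ - d * x + ((d : ℤ) - 1) * x := by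
      linear_combination e2 - hm2
    refine ⟨(δ : ℤ) - x, ⟨?_, ?_⟩, by linear_combination -hzeq⟩
    · intro nn hnn hmemΔ
      apply hz1 ((d - 1) * x + d * nn) ?_ ((hmem _).2 ⟨d - 1, hdlt, nn, hmemΔ, rfl⟩)
      push_cast [hd1]
      linear_combination (d : ℤ) * hnn - hzeq
    · intro δ0 hδ0 hδ00
      have hsS : d * δ0 ∈ S := (hmem _).2 ⟨0, by omega, δ0, hδ0, by ring⟩
      obtain ⟨m3, hm3S, hm3⟩ := hz2 (d * δ0) hsS (Nat.mul_ne_zero (by omega) hδ00)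
      push_cast at hm3
      obtain ⟨k3, hk3, δ3, hδ3, e3⟩ := (hmem m3).1 hm3S
      have e3' : (m3 : ℤ) = (k3 : ℤ) * x + (d : ℤ) * δ3 := by exact_mod_cast e3
      have hdvd3 : (d : ℤ) ∣ ((k3 : ℤ) - ((d - 1 : ℕ) : ℤ)) * (x : ℤ) := by
        rw [hd1]
        exact ⟨(δ : ℤ) - x + δ0 - δ3, by linear_combination -e3' + hm3 + hzeq⟩
      have hk3e := resuniq hgcd hk3 hdlt hdvd3
      subst hk3e
      rw [hd1] at e3'
      refine ⟨δ3, hδ3, ?_⟩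
      have hcan : (d : ℤ) * δ3 = d * ((δ : ℤ) - x + δ0) := by
        linear_combination -e3' + hm3 + hzeq
      have := mul_left_cancel₀ hd0 hcan
      linarith
  · rintro ⟨f, ⟨hf1, hf2⟩, rfl⟩
    constructor
    · intro n hn hnS
      obtain ⟨k, hk, δ, hδ, he⟩ := (hmem n).1 hnS
      have he' : (n : ℤ) = (k : ℤ) * x + (d : ℤ) * δ := by exact_mod_cast he
      have hdvd : (d : ℤ) ∣ ((k : ℤ) - ((d - 1 : ℕ) : ℤ)) * (x : ℤ) := by
        rw [hd1]
        exact ⟨f - δ, by linear_combination hn - he'⟩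
      have hke := resuniq hgcd hk hdlt hdvd
      subst hke
      rw [hd1] at he'
      have hcan : (d : ℤ) * δ = d * f := by linear_combination hn - he'
      exact hf1 δ (mul_left_cancel₀ hd0 hcan) hδ
    · intro s hsS hs0
      obtain ⟨k, hk, δ, hδ, he⟩ := (hmem s).1 hsS
      have he' : (s : ℤ) = (k : ℤ) * x + (d : ℤ) * δ := by exact_mod_cast he
      rcases Nat.eq_zero_or_pos δ with rfl | hδpos
      · have hkpos : 1 ≤ k := by
          rcases Nat.eq_zero_or_pos k with rfl | h
          · omega
          · exact h
        obtain ⟨m, hm, hmf⟩ := hf2 x hx hx0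
        refine ⟨(k - 1) * x + d * m, (hmem _).2 ⟨k - 1, by omega, m, hm, rfl⟩, ?_⟩
        have hc2 : ((k - 1 : ℕ) : ℤ) = (k : ℤ) - 1 := by omega
        push_cast [hc2]
        linear_combination (d : ℤ) * hmf - he'
      · obtain ⟨m, hm, hmf⟩ := hf2 δ hδ (by omega)
        refine ⟨(d - 1 + k) * x + d * m,
          ⟨(d - 1 + k) * x, ⟨d - 1 + k, rfl⟩, d * m, ⟨m, hm, rfl⟩, rfl⟩, ?_⟩
        have hc : ((d - 1 + k : ℕ) : ℤ) = (d : ℤ) - 1 + k := by omega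
        push_cast [hc]
        linear_combination (d : ℤ) * hmf - he'

lemma frob_mem_PF {S : Set ℕ} (hS : IsNumericalSemigroup S) (hne : S ≠ Set.univ) :
    ((frob S : ℕ) : ℤ) ∈ PF S := by
  have hnonempty : (Sᶜ : Set ℕ).Nonempty := Set.nonempty_compl.mpr hne
  have hbdd : BddAbove (Sᶜ : Set ℕ) := hS.2.bddAbove
  have hmem : frob S ∈ (Sᶜ : Set ℕ) := Nat.sSup_mem hnonempty hbdd
  have hmax : ∀ n, frob S < n → n ∈ S := by
    intro n hn
    by_contra h
    have : n ≤ frob S := le_csSup hbdd h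
    omega
  refine ⟨?_, ?_⟩
  · intro n hn
    have he : n = frob S := by exact_mod_cast hn
    subst he
    exact hmem
  · intro s hs hs0
    exact ⟨frob S + s, hmax _ (by omega), by push_cast; ring⟩

lemma conductor19 {Δ : Set ℕ} (hfin : (Δᶜ : Set ℕ).Finite) :
    ∃ C : ℕ, ∀ m, C ≤ m → m ∈ Δ := by
  refine ⟨sSup (Δᶜ : Set ℕ) + 1, fun m hm => ?_⟩
  by_contra h
  have : m ≤ sSup (Δᶜ : Set ℕ) := le_csSup hfin.bddAbove h
  omega

lemma exists_res {x d : ℕ} (hd : 2 ≤ d) (hgcd : Nat.gcd x d = 1) (n : ℕ) :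
    ∃ k, k < d ∧ (k * x) % d = n % d := by
  haveI : NeZero d := ⟨by omega⟩
  have hu : IsUnit (x : ZMod d) := by
    rw [ZMod.isUnit_iff_coprime]; exact hgcd
  set a : ZMod d := (n : ZMod d) * (x : ZMod d)⁻¹ with ha
  refine ⟨a.val, a.val_lt, ?_⟩
  have h1 : ((a.val * x : ℕ) : ZMod d) = (n : ZMod d) := by
    push_cast
    rw [ZMod.natCast_val, ZMod.cast_id, ha, mul_assoc, ZMod.inv_mul_of_unit _ hu, mul_one]
  exact (ZMod.natCast_eq_natCast_iff _ _ _).1 h1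

lemma S_submonoid {Δ : Set ℕ} (hΔ : IsSubmonoidN Δ) (d x : ℕ) :
    IsSubmonoidN (setAdd (natMultiples x) (dilate d Δ)) := by
  constructor
  · exact ⟨0, ⟨0, by ring⟩, 0, ⟨0, hΔ.1, by ring⟩, by ring⟩
  · rintro a b ⟨a1, ⟨k1, rfl⟩, b1, ⟨δ1, hδ1, rfl⟩, rfl⟩ ⟨a2, ⟨k2, rfl⟩, b2, ⟨δ2, hδ2, rfl⟩, rfl⟩
    exact ⟨(k1 + k2) * x, ⟨k1 + k2, rfl⟩, d * (δ1 + δ2), ⟨δ1 + δ2, hΔ.2 _ _ hδ1 hδ2, by ring⟩,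
      by ring⟩

lemma S_cofinite {Δ : Set ℕ} (hfin : (Δᶜ : Set ℕ).Finite) {d x : ℕ} (hd : 2 ≤ d)
    (hgcd : Nat.gcd x d = 1) :
    ((setAdd (natMultiples x) (dilate d Δ))ᶜ : Set ℕ).Finite := by
  obtain ⟨C, hC⟩ := conductor19 hfin
  apply Set.Finite.subset (Set.finite_Iio (d * C + d * x))
  intro n hn
  simp only [Set.mem_compl_iff] at hn
  rw [Set.mem_Iio]
  by_contra h'
  push_neg at h'
  apply hn
  obtain ⟨k, hk, hmod⟩ := exists_res hd hgcd n
  have hkx : k * x ≤ n := by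
    have h2 : k * x ≤ d * x := Nat.mul_le_mul_right x (le_of_lt hk)
    omega
  have h2 : k * x ≤ d * x := Nat.mul_le_mul_right x (le_of_lt hk)
  have hdvd : d ∣ n - k * x := (Nat.modEq_iff_dvd' hkx).mp hmod
  obtain ⟨e, he⟩ := hdvd
  have hCe : C ≤ e := by
    have h1 : d * C ≤ d * e := by omega
    exact Nat.le_of_mul_le_mul_left h1 (by omega)
  exact ⟨k * x, ⟨k, rfl⟩, d * e, ⟨e, hC e hCe, rfl⟩, by omega⟩

lemma one_not_mem {Δ : Set ℕ} {d x : ℕ} (hx2 : 2 ≤ x) (hd : 2 ≤ d) :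
    (1 : ℕ) ∉ setAdd (natMultiples x) (dilate d Δ) := by
  rintro ⟨a, ⟨j, rfl⟩, b, ⟨δ, hδ, h0⟩, h⟩
  have h : 1 = j * x + d * δ := by rw [← h0] at h; exact h
  rcases Nat.eq_zero_or_pos j with rfl | hj
  · rcases Nat.eq_zero_or_pos δ with rfl | hδ'
    · omega
    · have : 2 ≤ d * δ := by
        calc 2 ≤ d := hd
          _ = d * 1 := (mul_one d).symm
          _ ≤ d * δ := Nat.mul_le_mul_left d hδ'
      linarith
  · have : 2 ≤ j * x := by
      calc 2 ≤ x := hx2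
        _ = 1 * x := (one_mul x).symm
        _ ≤ j * x := Nat.mul_le_mul_right x hj
    linarith

end Stmt19Aux

theorem stmt19 (Δ : Set ℕ) (hΔ : IsNumericalSemigroup Δ) (hne : Δ ≠ Set.univ)
    (d : ℕ) (hd : 2 ≤ d) (x : ℕ) (hx : x ∈ Δ) (hgcd : Nat.gcd x d = 1)
    (S : Set ℕ) (hS : S = setAdd (natMultiples x) (dilate d Δ)) :
    PF S = (fun f => (d : ℤ) * f + ((d : ℤ) - 1) * (x : ℤ)) '' PF Δ ∧
    (PF S).ncard = (PF Δ).ncard ∧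
    (PF S = {((frob S : ℕ) : ℤ)} ↔ PF Δ = {((frob Δ : ℕ) : ℤ)}) := by
  subst hS
  have hx0 : x ≠ 0 := by
    rintro rfl
    simp at hgcd
    omega
  have hx2 : 2 ≤ x := by
    rcases Nat.lt_or_ge x 2 with h | h
    · interval_cases x
      · omega
      · exfalso
        apply hne
        apply Set.eq_univ_of_forall
        intro n
        simpa using Stmt19Aux.nat_mul_mem hΔ.1 hx n
    · exact h
  have hmain := Stmt19Aux.main_eq hΔ hd hx hgcd hx0
  have hd0 : (d : ℤ) ≠ 0 := by exact_mod_cast (by omega : d ≠ 0)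
  have hinj : Function.Injective (fun f : ℤ => (d : ℤ) * f + ((d : ℤ) - 1) * (x : ℤ)) := by
    intro a b h
    simp only at h
    have h2 : (d : ℤ) * a = (d : ℤ) * b := by linarith
    exact mul_left_cancel₀ hd0 h2
  have hSnum : IsNumericalSemigroup (setAdd (natMultiples x) (dilate d Δ)) :=
    ⟨Stmt19Aux.S_submonoid hΔ.1 d x, Stmt19Aux.S_cofinite hΔ.2 hd hgcd⟩
  have hSne : setAdd (natMultiples x) (dilate d Δ) ≠ Set.univ := by
    intro h
    exact Stmt19Aux.one_not_mem hx2 hd (h ▸ Set.mem_univ 1)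
  refine ⟨hmain, by rw [hmain]; exact Set.ncard_image_of_injective _ hinj, ?_⟩
  constructor
  · intro hPS
    have hFΔ := Stmt19Aux.frob_mem_PF hΔ hne
    apply (Set.eq_singleton_iff_unique_mem).mpr
    refine ⟨hFΔ, fun f hf => ?_⟩
    have h1 : (fun f : ℤ => (d : ℤ) * f + ((d : ℤ) - 1) * (x : ℤ)) f ∈
        PF (setAdd (natMultiples x) (dilate d Δ)) := by
      rw [hmain]; exact Set.mem_image_of_mem _ hf
    have h2 : (fun f : ℤ => (d : ℤ) * f + ((d : ℤ) - 1) * (x : ℤ)) ((frob Δ : ℕ) : ℤ) ∈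
        PF (setAdd (natMultiples x) (dilate d Δ)) := by
      rw [hmain]; exact Set.mem_image_of_mem _ hFΔ
    rw [hPS, Set.mem_singleton_iff] at h1 h2
    exact hinj (h1.trans h2.symm)
  · intro hPΔ
    have hFS := Stmt19Aux.frob_mem_PF hSnum hSne
    rw [hmain, hPΔ, Set.image_singleton] at hFS ⊢
    rw [Set.mem_singleton_iff] at hFS
    rw [hFS]
end
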